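/- arXiv:1904.00534 — 14 statements merged into one kernel-verified Lean document; each statement's English description precedes it below -/
import Mathlib

section
/- Let (X,c_2) be a finite digital image in ℤ². Suppose there exists x₀ ∈ X such that N_{c₂}(x₀) is c₂-connected and #N_{c₂}(x₀) ∈ {1,2,3}. Then (X,c_2) is reducible. -/
/-- `c_u` adjacency on `ℤⁿ`: distinct points that differ by at most 1 in every
coordinate and differ in at most `u` coordinates. -/
def cuAdj (n u : ℕ) (x y : Fin n → ℤ) : Prop :=
  x ≠ y ∧ (∀ i, (x i - y i).natAbs ≤ 1) ∧
    (Finset.univ.filter fun i => x i ≠ y i).card ≤ u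

/-- `(κ,λ)`-continuity of `f` on `X`: adjacent points have equal or adjacent images. -/
def DigCont {α β : Type*} (κ : α → α → Prop) (lam : β → β → Prop)
    (X : Set α) (f : α → β) : Prop :=
  ∀ x ∈ X, ∀ x' ∈ X, κ x x' → f x = f x' ∨ lam (f x) (f x')

/-- `f ∈ C(X,κ)`: a `κ`-continuous self-map of `X`. -/
def InC {α : Type*} (κ : α → α → Prop) (X : Set α) (f : α → α) : Prop :=
  Set.MapsTo f X X ∧ DigCont κ κ X f

/-- `A` is a freezing set for `(X,κ)`: every `f ∈ C(X,κ)` fixing `A`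
pointwise is the identity on `X`. -/
def FreezingSet {α : Type*} (κ : α → α → Prop) (X A : Set α) : Prop :=
  ∀ f, InC κ X f → (∀ a ∈ A, f a = a) → ∀ x ∈ X, f x = x

/-- `X` is `κ`-connected: any two points of `X` are joined by a `κ`-path in `X`. -/
def DigConnected {α : Type*} (κ : α → α → Prop) (X : Set α) : Prop :=
  ∀ x ∈ X, ∀ y ∈ X, Relation.ReflTransGen (fun a b => a ∈ X ∧ b ∈ X ∧ κ a b) x y

/-- Digital `κ`-homotopy between self-maps `f, g` of `X`. -/
def DigHomotopic {α : Type*} (κ : α → α → Prop) (X : Set α) (f g : α → α) : Prop :=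
  ∃ (m : ℕ) (h : α → ℤ → α),
    (∀ x ∈ X, h x 0 = f x) ∧ (∀ x ∈ X, h x m = g x) ∧
    (∀ x ∈ X, ∀ t : ℤ, 0 ≤ t → t ≤ m → h x t ∈ X) ∧
    (∀ x ∈ X, ∀ t : ℤ, 0 ≤ t → t < m → (h x t = h x (t + 1) ∨ κ (h x t) (h x (t + 1)))) ∧
    (∀ t : ℤ, 0 ≤ t → t ≤ m → DigCont κ κ X fun x => h x t)

/-- Homotopy equivalence of digital images `(X,κ)` and `(Y,lam)`. -/
def DigHomotopyEquiv {α β : Type*} (κ : α → α → Prop) (lam : β → β → Prop)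
    (X : Set α) (Y : Set β) : Prop :=
  ∃ (f : α → β) (g : β → α),
    Set.MapsTo f X Y ∧ DigCont κ lam X f ∧
    Set.MapsTo g Y X ∧ DigCont lam κ Y g ∧
    DigHomotopic κ X (g ∘ f) id ∧ DigHomotopic lam Y (f ∘ g) id

/-- A finite digital image is reducible if it is homotopy equivalent to a
digital image with fewer points. -/
def Reducible {α : Type*} (κ : α → α → Prop) (X : Set α) : Prop :=
  ∃ (k : ℕ) (Y : Set (Fin k → ℤ)) (lam : (Fin k → ℤ) → (Fin k → ℤ) → Prop),
    Y.Finite ∧ Y.ncard < X.ncard ∧ DigHomotopyEquiv κ lam X Y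
lemma cuAdj_symm {n u : ℕ} {x y : Fin n → ℤ} (h : cuAdj n u x y) : cuAdj n u y x := by
  obtain ⟨h1, h2, h3⟩ := h
  refine ⟨h1.symm, fun i => ?_, ?_⟩
  · have := h2 i; omega
  · have : (Finset.univ.filter fun i => y i ≠ x i) =
        (Finset.univ.filter fun i => x i ≠ y i) := by
      ext i; simp [ne_comm]
    rw [this]; exact h3

lemma reach_closed {α : Type*} {R : α → α → Prop} {S : Set α}
    (hS : ∀ u v, u ∈ S → R u v → v ∈ S) {x y : α}
    (h : Relation.ReflTransGen R x y) (hx : x ∈ S) : y ∈ S := by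
  induction h with
  | refl => exact hx
  | tail _ r ih => exact hS _ _ ih r

/-- A connected set with at most 3 points has a dominating vertex. -/
lemma exists_dom {N : Set (Fin 2 → ℤ)} (hconn : DigConnected (cuAdj 2 2) N)
    (hcard : N.ncard ∈ ({1, 2, 3} : Set ℕ)) :
    ∃ p ∈ N, ∀ q ∈ N, q = p ∨ cuAdj 2 2 p q := by
  set R := fun a b => a ∈ N ∧ b ∈ N ∧ cuAdj 2 2 a b with hR
  rcases hcard with h1 | h2 | h3
  · obtain ⟨a, rfl⟩ := Set.ncard_eq_one.mp h1
    exact ⟨a, rfl, fun q hq => Or.inl hq⟩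
  · obtain ⟨a, b, hab, rfl⟩ := Set.ncard_eq_two.mp h2
    have haN : a ∈ ({a, b} : Set _) := by simp
    have hbN : b ∈ ({a, b} : Set _) := by simp
    have := (hconn a haN b hbN).cases_head
    rcases this with h | ⟨c, hc, _⟩
    · exact absurd h hab
    · have hcab : c = a ∨ c = b := hc.2.1
      have : cuAdj 2 2 a c := hc.2.2
      rcases hcab with rfl | rfl
      · exact absurd rfl this.1
      · refine ⟨a, haN, fun q hq => ?_⟩
        rcases hq with rfl | rfl
        · exact Or.inl rfl
        · exact Or.inr this
  · obtain ⟨a, b, c, hab, hac, hbc, rfl⟩ := Set.ncard_eq_three.mp h3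
    have haN : a ∈ ({a, b, c} : Set _) := by simp
    have hbN : b ∈ ({a, b, c} : Set _) := by simp
    have hcN : c ∈ ({a, b, c} : Set _) := by simp
    by_cases Eab : cuAdj 2 2 a b <;> by_cases Eac : cuAdj 2 2 a c <;>
      by_cases Ebc : cuAdj 2 2 b c
    -- ab, ac, bc
    · refine ⟨a, haN, fun q hq => ?_⟩
      rcases hq with rfl | rfl | rfl
      exacts [Or.inl rfl, Or.inr Eab, Or.inr Eac]
    -- ab, ac, ¬bc
    · refine ⟨a, haN, fun q hq => ?_⟩
      rcases hq with rfl | rfl | rfl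
      exacts [Or.inl rfl, Or.inr Eab, Or.inr Eac]
    -- ab, ¬ac, bc
    · refine ⟨b, hbN, fun q hq => ?_⟩
      rcases hq with rfl | rfl | rfl
      exacts [Or.inr (cuAdj_symm Eab), Or.inl rfl, Or.inr Ebc]
    -- ab, ¬ac, ¬bc : c is unreachable from a
    · exfalso
      have hclosed : ∀ u v, u ∈ ({a, b} : Set _) → R u v → v ∈ ({a, b} : Set _) := by
        intro u v hu hv
        rcases hv.2.1 with rfl | rfl | rfl
        · simp
        · simp
        · exfalso
          rcases hu with rfl | rfl
          · exact Eac hv.2.2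
          · exact Ebc hv.2.2
      have := reach_closed hclosed (hconn a haN c hcN) (by simp)
      rcases this with rfl | rfl
      · exact hac rfl
      · exact hbc rfl
    -- ¬ab, ac, bc
    · refine ⟨c, hcN, fun q hq => ?_⟩
      rcases hq with rfl | rfl | rfl
      exacts [Or.inr (cuAdj_symm Eac), Or.inr (cuAdj_symm Ebc), Or.inl rfl]
    -- ¬ab, ac, ¬bc : b unreachable from a
    · exfalso
      have hclosed : ∀ u v, u ∈ ({a, c} : Set _) → R u v → v ∈ ({a, c} : Set _) := by
        intro u v hu hv
        rcases hv.2.1 with rfl | rfl | rfl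
        · simp
        · exfalso
          rcases hu with rfl | rfl
          · exact Eab hv.2.2
          · exact Ebc (cuAdj_symm hv.2.2)
        · simp
      have := reach_closed hclosed (hconn a haN b hbN) (by simp)
      rcases this with rfl | rfl
      · exact hab rfl
      · exact hbc rfl
    -- ¬ab, ¬ac, bc : b unreachable from a
    · exfalso
      have hclosed : ∀ u v, u ∈ ({a} : Set _) → R u v → v ∈ ({a} : Set _) := by
        intro u v hu hv
        rcases hu with rfl
        rcases hv.2.1 with rfl | rfl | rfl
        · simp
        · exact absurd hv.2.2 Eab
        · exact absurd hv.2.2 Eac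
      have := reach_closed hclosed (hconn a haN b hbN) (by simp)
      exact hab this.symm
    -- none
    · exfalso
      have hclosed : ∀ u v, u ∈ ({a} : Set _) → R u v → v ∈ ({a} : Set _) := by
        intro u v hu hv
        rcases hu with rfl
        rcases hv.2.1 with rfl | rfl | rfl
        · simp
        · exact absurd hv.2.2 Eab
        · exact absurd hv.2.2 Eac
      have := reach_closed hclosed (hconn a haN b hbN) (by simp)
      exact hab this.symm
/-- If a finite digital image `(X,c₂)` in `ℤ²` has a point `x₀` whose
`c₂`-neighborhood is `c₂`-connected and has 1, 2 or 3 points, then `(X,c₂)`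
is reducible. -/
theorem stmt0 (X : Set (Fin 2 → ℤ)) (hfin : X.Finite)
    (x0 : Fin 2 → ℤ) (hx0 : x0 ∈ X)
    (N : Set (Fin 2 → ℤ)) (hN : N = {y ∈ X | cuAdj 2 2 y x0})
    (hconn : DigConnected (cuAdj 2 2) N)
    (hcard : N.ncard ∈ ({1, 2, 3} : Set ℕ)) :
    Reducible (cuAdj 2 2) X := by
  obtain ⟨p, hpN, hdom⟩ := exists_dom hconn hcard
  have hpX : p ∈ X := by rw [hN] at hpN; exact hpN.1
  have hpadj : cuAdj 2 2 p x0 := by rw [hN] at hpN; exact hpN.2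
  have hpne : p ≠ x0 := hpadj.1
  set f : (Fin 2 → ℤ) → (Fin 2 → ℤ) := fun x => if x = x0 then p else x with hf
  -- continuity of f on X
  have hfc : DigCont (cuAdj 2 2) (cuAdj 2 2) X f := by
    intro x hx y hy hadj
    by_cases hxx : x = x0 <;> by_cases hyy : y = x0
    · subst hxx; subst hyy; exact absurd rfl hadj.1
    · subst hxx
      have hyN : y ∈ N := by rw [hN]; exact ⟨hy, cuAdj_symm hadj⟩
      simp only [hf, if_pos rfl, if_neg hyy]
      rcases hdom y hyN with rfl | h
      · exact Or.inl rfl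
      · exact Or.inr h
    · subst hyy
      have hxN : x ∈ N := by rw [hN]; exact ⟨hx, hadj⟩
      simp only [hf, if_pos rfl, if_neg hxx]
      rcases hdom x hxN with rfl | h
      · exact Or.inl rfl
      · exact Or.inr (cuAdj_symm h)
    · simp only [hf, if_neg hxx, if_neg hyy]
      exact Or.inr hadj
  have hfX : ∀ x ∈ X, f x ∈ X := by
    intro x hx
    by_cases hxx : x = x0
    · simp only [hf, if_pos hxx]; exact hpX
    · simpa only [hf, if_neg hxx] using hx
  refine ⟨2, X \ {x0}, cuAdj 2 2, hfin.subset Set.diff_subset, 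
    Set.ncard_diff_singleton_lt_of_mem hx0 hfin, f, id, ?_, hfc, ?_, ?_, ?_, ?_⟩
  · -- MapsTo f X (X \ {x0})
    intro x hx
    by_cases hxx : x = x0
    · simp only [hf, if_pos hxx]; exact ⟨hpX, hpne⟩
    · simp only [hf, if_neg hxx]; exact ⟨hx, hxx⟩
  · -- MapsTo id
    exact fun x hx => hx.1
  · -- DigCont of id
    intro x _ y _ hadj; exact Or.inr hadj
  · -- id ∘ f homotopic to id on X
    refine ⟨1, fun x t => if t ≤ 0 then f x else x, ?_, ?_, ?_, ?_, ?_⟩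
    · intro x _; simp
    · intro x _; norm_num
    · intro x hx t _ _
      dsimp only
      split_ifs
      · exact hfX x hx
      · exact hx
    · intro x hx t ht0 ht1
      have : t = 0 := by omega
      subst this
      dsimp only
      rw [if_pos (le_refl (0:ℤ)), if_neg (by norm_num : ¬ ((0:ℤ)+1) ≤ 0)]
      by_cases hxx : x = x0
      · subst hxx
        simp only [hf, if_pos rfl]
        exact Or.inr hpadj
      · simp only [hf, if_neg hxx]
        exact Or.inl trivial
    · intro t ht0 ht1
      have : t = 0 ∨ t = 1 := by omega
      rcases this with rfl | rfl
      · simpa using hfc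
      · intro x hx y hy hadj
        norm_num
        exact Or.inr hadj
  · -- f ∘ id homotopic to id on X \ {x0}
    refine ⟨0, fun x _ => x, ?_, ?_, ?_, ?_, ?_⟩
    · intro x hx
      exact (if_neg hx.2).symm
    · intro x _; rfl
    · intro x hx t _ _; exact hx
    · intro x _ t ht0 ht1; omega
    · intro t _ _ x _ y _ hadj; exact Or.inr hadj
end

section
/- Let A be a freezing set for the digital image (X,κ) and let F: (X,κ) → (Y,λ) be an isomorphism of digital images. Then F(A) is a freezing set for (Y,λ). -/
/-- `F : (X,κ) → (Y,lam)` is an isomorphism of digital images with inverse `G`: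
a continuous bijection whose inverse is continuous. -/
def DigIso {α β : Type*} (κ : α → α → Prop) (lam : β → β → Prop)
    (X : Set α) (Y : Set β) (F : α → β) (G : β → α) : Prop :=
  Set.MapsTo F X Y ∧ Set.MapsTo G Y X ∧
  (∀ x ∈ X, G (F x) = x) ∧ (∀ y ∈ Y, F (G y) = y) ∧
  DigCont κ lam X F ∧ DigCont lam κ Y G

/-- The image of a freezing set under an isomorphism of digital images is a
freezing set. -/
theorem stmt2 {n k : ℕ} (κ : (Fin n → ℤ) → (Fin n → ℤ) → Prop)
    (lam : (Fin k → ℤ) → (Fin k → ℤ) → Prop)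
    (X A : Set (Fin n → ℤ)) (Y : Set (Fin k → ℤ)) (hA : A ⊆ X)
    (hfr : FreezingSet κ X A)
    (F : (Fin n → ℤ) → Fin k → ℤ) (G : (Fin k → ℤ) → Fin n → ℤ)
    (hiso : DigIso κ lam X Y F G) :
    FreezingSet lam Y (F '' A) := by
  obtain ⟨hFmaps, hGmaps, hGF, hFG, hFcont, hGcont⟩ := hiso
  intro g hg hgfix y hy
  obtain ⟨hgmaps, hgcont⟩ := hg
  -- consider f = G ∘ g ∘ F on X
  have hfInC : InC κ X (fun x => G (g (F x))) := by
    constructor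
    · intro x hx
      exact hGmaps (hgmaps (hFmaps hx))
    · intro x hx x' hx' hadj
      rcases hFcont x hx x' hx' hadj with h | h
      · left; exact congrArg G (congrArg g h)
      · rcases hgcont (F x) (hFmaps hx) (F x') (hFmaps hx') h with h2 | h2
        · left; exact congrArg G h2
        · exact hGcont (g (F x)) (hgmaps (hFmaps hx)) (g (F x'))
            (hgmaps (hFmaps hx')) h2
  have hfix : ∀ a ∈ A, (fun x => G (g (F x))) a = a := by
    intro a ha
    have : g (F a) = F a := hgfix (F a) ⟨a, ha, rfl⟩
    simp only [this]
    exact hGF a (hA ha)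
  have hG : G (g (F (G y))) = G y := hfr _ hfInC hfix (G y) (hGmaps hy)
  have h1 : F (G y) = y := hFG y hy
  rw [h1] at hG
  have hgy : g y ∈ Y := hgmaps hy
  calc g y = F (G (g y)) := (hFG _ hgy).symm
    _ = F (G y) := by rw [hG]
    _ = y := h1
end

section
/- Let (X,c_u) ⊂ ℤⁿ be a digital image, 1 ≤ u ≤ n. Let q, q' ∈ X be c_u-adjacent and let f ∈ C(X,c_u). Let p_i denote projection to the i-th coordinate. Then: (1) if p_i(f(q)) > p_i(q) > p_i(q'), then p_i(f(q')) > p_i(q'); (2) if p_i(f(q)) < p_i(q) < p_i(q'), then p_i(f(q')) < p_i(q'). -/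
/-- A continuous map that moves a point in coordinate `i` also moves the
point "behind" it: if `q ↔ q'` and `f` pushes `q` past itself in coordinate
`i` away from `q'`, then `f` moves `q'` in the same direction. -/
theorem stmt3 {n u : ℕ} (hu1 : 1 ≤ u) (hun : u ≤ n)
    (X : Set (Fin n → ℤ)) (q q' : Fin n → ℤ) (hq : q ∈ X) (hq' : q' ∈ X)
    (hadj : cuAdj n u q q')
    (f : (Fin n → ℤ) → Fin n → ℤ) (hf : InC (cuAdj n u) X f) (i : Fin n) :
    (f q i > q i → q i > q' i → f q' i > q' i) ∧
    (f q i < q i → q i < q' i → f q' i < q' i) := by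
  have hqq : (q i - q' i).natAbs ≤ 1 := hadj.2.1 i
  have hfd : (f q i - f q' i).natAbs ≤ 1 := by
    rcases hf.2 q hq q' hq' hadj with h | h
    · simp [h]
    · exact h.2.1 i
  constructor <;> intro h3 h4 <;> omega
end

section
/- Let (X,κ) be a digital image. Let X' be a proper subset of X that is a retract of X. Then no subset of X' is a freezing set for (X,κ). -/
/-- If `X'` is a proper subset of `X` that is a retract of `X`, then no
subset of `X'` is a freezing set for `(X,κ)`. -/
theorem stmt4 {n : ℕ} (κ : (Fin n → ℤ) → (Fin n → ℤ) → Prop)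
    (X X' : Set (Fin n → ℤ)) (hsub : X' ⊆ X) (hne : X' ≠ X)
    (r : (Fin n → ℤ) → Fin n → ℤ)
    (hmaps : Set.MapsTo r X X') (hcont : DigCont κ κ X r)
    (hretr : ∀ a ∈ X', r a = a) :
    ∀ A ⊆ X', ¬ FreezingSet κ X A := by
  intro A hA hF
  apply hne
  apply Set.Subset.antisymm hsub
  intro x hx
  have hid : r x = x := hF r ⟨hmaps.mono_right hsub, hcont⟩
    (fun a ha => hretr a (hA ha)) x hx
  rw [← hid]; exact hmaps hx
end

section
/- Let (X,c_2) be a finite connected digital image in ℤ². Suppose x₀ ∈ X is such that N_{c₂}(x₀) is c₂-connected and #N_{c₂}(x₀) ∈ {1,2,3}. If A is a freezing set for (X,c_2), then x₀ ∈ A. -/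
lemma cuAdj_irrefl {n u : ℕ} (x : Fin n → ℤ) : ¬ cuAdj n u x x := fun h => h.1 rfl

/-- last step of a nontrivial path -/
lemma last_step {α : Type*} {R : α → α → Prop} {x y : α}
    (h : Relation.ReflTransGen R x y) (hxy : x ≠ y) : ∃ z, R z y := by
  rcases h.cases_tail with h' | ⟨z, _, hz⟩
  · exact absurd h'.symm hxy
  · exact ⟨z, hz⟩

/-- In a connected set of 1, 2 or 3 points there is a point adjacent to all others. -/
lemma exists_dominator {α : Type*} {adj : α → α → Prop}
    (hs : ∀ x y, adj x y → adj y x) (hi : ∀ x, ¬ adj x x)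
    (N : Set α) (hconn : DigConnected adj N)
    (hcard : N.ncard ∈ ({1, 2, 3} : Set ℕ)) :
    ∃ p ∈ N, ∀ q ∈ N, q = p ∨ adj p q := by
  rcases hcard with h1 | h2 | h3
  · obtain ⟨a, ha⟩ := Set.ncard_eq_one.mp h1
    exact ⟨a, by simp [ha], fun q hq => by simp [ha] at hq; exact Or.inl hq⟩
  · obtain ⟨a, b, hab, hN⟩ := Set.ncard_eq_two.mp h2
    have haN : a ∈ N := by simp [hN]
    have hbN : b ∈ N := by simp [hN]
    obtain ⟨z, hz⟩ := last_step (hconn a haN b hbN) hab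
    have hzab : z = a ∨ z = b := by have := hz.1; simp [hN] at this; exact this
    have hzb : z ≠ b := fun h => hi b (h ▸ hz.2.2)
    have heab : adj a b := by
      rcases hzab with h | h
      · exact h ▸ hz.2.2
      · exact absurd h hzb
    refine ⟨a, haN, fun q hq => ?_⟩
    simp [hN] at hq
    rcases hq with h | h
    · exact Or.inl h
    · exact Or.inr (h ▸ heab)
  · obtain ⟨a, b, c, hab, hac, hbc, hN⟩ := Set.ncard_eq_three.mp h3
    have haN : a ∈ N := by simp [hN]
    have hbN : b ∈ N := by simp [hN]
    have hcN : c ∈ N := by simp [hN]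
    have mem3 : ∀ z ∈ N, z = a ∨ z = b ∨ z = c := by
      intro z hz; simpa [hN] using hz
    -- last-step facts: each vertex has a neighbor among the others
    have lastfact : ∀ x ∈ N, ∀ y ∈ N, x ≠ y →
        (∃ z ∈ N, z ≠ y ∧ adj z y) := by
      intro x hx y hy hxy
      obtain ⟨z, hz⟩ := last_step (hconn x hx y hy) hxy
      exact ⟨z, hz.1, fun h => hi y (h ▸ hz.2.2), hz.2.2⟩
    have fb : adj a b ∨ adj c b := by
      obtain ⟨z, hzN, hzb, hadj⟩ := lastfact a haN b hbN hab
      rcases mem3 z hzN with h | h | h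
      · exact Or.inl (h ▸ hadj)
      · exact absurd h hzb
      · exact Or.inr (h ▸ hadj)
    have fc : adj a c ∨ adj b c := by
      obtain ⟨z, hzN, hzc, hadj⟩ := lastfact a haN c hcN hac
      rcases mem3 z hzN with h | h | h
      · exact Or.inl (h ▸ hadj)
      · exact Or.inr (h ▸ hadj)
      · exact absurd h hzc
    have fa : adj b a ∨ adj c a := by
      obtain ⟨z, hzN, hza, hadj⟩ := lastfact b hbN a haN hab.symm
      rcases mem3 z hzN with h | h | h
      · exact absurd h hza
      · exact Or.inl (h ▸ hadj)
      · exact Or.inr (h ▸ hadj)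
    have key : (adj a b ∧ adj a c) ∨ (adj b a ∧ adj b c) ∨ (adj c a ∧ adj c b) := by
      have s1 := hs a b
      have s2 := hs b a
      have s3 := hs a c
      have s4 := hs c a
      have s5 := hs b c
      have s6 := hs c b
      tauto
    rcases key with ⟨h1, h2⟩ | ⟨h1, h2⟩ | ⟨h1, h2⟩
    · refine ⟨a, haN, fun q hq => ?_⟩
      rcases mem3 q hq with h | h | h
      · exact Or.inl h
      · exact Or.inr (h ▸ h1)
      · exact Or.inr (h ▸ h2)
    · refine ⟨b, hbN, fun q hq => ?_⟩
      rcases mem3 q hq with h | h | h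
      · exact Or.inr (h ▸ h1)
      · exact Or.inl h
      · exact Or.inr (h ▸ h2)
    · refine ⟨c, hcN, fun q hq => ?_⟩
      rcases mem3 q hq with h | h | h
      · exact Or.inr (h ▸ h1)
      · exact Or.inr (h ▸ h2)
      · exact Or.inl h

/-- If a finite connected digital image `(X,c₂)` in `ℤ²` has a point `x₀`
whose `c₂`-neighborhood is `c₂`-connected with 1, 2 or 3 points, then every
freezing set for `(X,c₂)` contains `x₀`. -/
theorem stmt6 (X : Set (Fin 2 → ℤ)) (hfin : X.Finite)
    (hconnX : DigConnected (cuAdj 2 2) X)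
    (x0 : Fin 2 → ℤ) (hx0 : x0 ∈ X)
    (N : Set (Fin 2 → ℤ)) (hN : N = {y ∈ X | cuAdj 2 2 y x0})
    (hconn : DigConnected (cuAdj 2 2) N)
    (hcard : N.ncard ∈ ({1, 2, 3} : Set ℕ))
    (A : Set (Fin 2 → ℤ)) (hA : A ⊆ X) (hfr : FreezingSet (cuAdj 2 2) X A) :
    x0 ∈ A := by
  by_contra hx0A
  obtain ⟨p, hpN, hdom⟩ := exists_dominator (adj := cuAdj 2 2) (fun _ _ h => cuAdj_symm h) (fun x => cuAdj_irrefl x)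
    N hconn hcard
  have hpX : p ∈ X := by rw [hN] at hpN; exact hpN.1
  have hpadj : cuAdj 2 2 p x0 := by rw [hN] at hpN; exact hpN.2
  have hpne : p ≠ x0 := hpadj.1
  classical
  set f : (Fin 2 → ℤ) → (Fin 2 → ℤ) := fun x => if x = x0 then p else x with hf
  have hmaps : Set.MapsTo f X X := by
    intro x hx
    by_cases h : x = x0 <;> simp [hf, h, hpX, hx]
  have hcont : DigCont (cuAdj 2 2) (cuAdj 2 2) X f := by
    intro x hx x' hx' hadj
    by_cases h1 : x = x0 <;> by_cases h2 : x' = x0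
    · exact absurd (h1 ▸ h2 ▸ hadj) (cuAdj_irrefl x0)
    · -- f x = p, f x' = x'
      have hx'N : x' ∈ N := by
        rw [hN]; exact ⟨hx', cuAdj_symm (h1 ▸ hadj)⟩
      simp only [hf, if_pos h1, if_neg h2]
      rcases hdom x' hx'N with h | h
      · exact Or.inl h.symm
      · exact Or.inr h
    · have hxN : x ∈ N := by
        rw [hN]; exact ⟨hx, h2 ▸ hadj⟩
      simp only [hf, if_neg h1, if_pos h2]
      rcases hdom x hxN with h | h
      · exact Or.inl h
      · exact Or.inr (cuAdj_symm h)
    · simp only [hf, if_neg h1, if_neg h2]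
      exact Or.inr hadj
  have hfix : ∀ a ∈ A, f a = a := by
    intro a ha
    have : a ≠ x0 := fun h => hx0A (h ▸ ha)
    simp [hf, this]
  have := hfr f ⟨hmaps, hcont⟩ hfix x0 hx0
  simp [hf] at this
  exact hpne this
end

section
/- Let a < b in ℤ with [a,b]_ℤ ⊂ [c,d]_ℤ, and let f: [a,b]_ℤ → [c,d]_ℤ be c₁-continuous. If f(a) = a and f(b) = b, then f(t) = t for all t ∈ [a,b]_ℤ. Consequently {a,b} is a freezing set for ([a,b]_ℤ, c₁), and it is minimal: no proper subset of {a,b} is a freezing set. -/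
/-- `c₁` adjacency on `ℤ`: integers differing by exactly 1. -/
def adjZ (x y : ℤ) : Prop := (x - y).natAbs = 1


lemma key7 (a b : ℤ) (f : ℤ → ℤ) (hc : DigCont adjZ adjZ (Set.Icc a b) f)
    (hfa : f a = a) (hfb : f b = b) : ∀ t ∈ Set.Icc a b, f t = t := by
  have hup : ∀ t, a ≤ t → (t ≤ b → f t ≤ t) := by
    refine Int.le_induction (fun _ => by omega) ?_
    intro n hn ih hnb
    have h1 : n ≤ b := by omega
    have h2 := ih h1
    have hadj : adjZ n (n + 1) := by unfold adjZ; omega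
    rcases hc n ⟨hn, h1⟩ (n + 1) ⟨by omega, hnb⟩ hadj with h | h
    · omega
    · unfold adjZ at h; omega
  have hdn : ∀ t, t ≤ b → (a ≤ t → t ≤ f t) := by
    refine Int.le_induction_down (fun _ => by omega) ?_
    intro n hn ih hna
    have h1 : a ≤ n := by omega
    have h2 := ih h1
    have hadj : adjZ n (n - 1) := by unfold adjZ; omega
    rcases hc n ⟨h1, hn⟩ (n - 1) ⟨hna, by omega⟩ hadj with h | h
    · omega
    · unfold adjZ at h; omega
  intro t ⟨h1, h2⟩
  have := hup t h1 h2
  have := hdn t h2 h1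
  omega

/-- For a digital interval `[a,b]_ℤ ⊆ [c,d]_ℤ`: a `c₁`-continuous
`f : [a,b]_ℤ → [c,d]_ℤ` fixing `a` and `b` fixes all of `[a,b]_ℤ`; hence
`{a,b}` is a freezing set for `([a,b]_ℤ, c₁)`, and it is minimal. -/
theorem stmt7 (a b c d : ℤ) (hab : a < b) (hsub : Set.Icc a b ⊆ Set.Icc c d) :
    (∀ f : ℤ → ℤ, Set.MapsTo f (Set.Icc a b) (Set.Icc c d) →
      DigCont adjZ adjZ (Set.Icc a b) f → f a = a → f b = b →
      ∀ t ∈ Set.Icc a b, f t = t) ∧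
    FreezingSet adjZ (Set.Icc a b) {a, b} ∧
    (∀ B ⊂ ({a, b} : Set ℤ), ¬ FreezingSet adjZ (Set.Icc a b) B) := by

  refine ⟨fun f _ hc hfa hfb => key7 a b f hc hfa hfb, ?_, ?_⟩
  · intro f hf hfix x hx
    exact key7 a b f hf.2 (hfix a (Or.inl rfl)) (hfix b (Or.inr rfl)) x hx
  · intro B hB hF
    have hsubB := hB.1
    have hmiss : a ∉ B ∨ b ∉ B := by
      by_contra h
      push_neg at h
      exact hB.2 (fun x hx => by rcases hx with rfl | rfl; exacts [h.1, h.2])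
    rcases hmiss with ha | hb
    · -- use g x = min (x+1) b
      set g : ℤ → ℤ := fun x => min (x + 1) b with hg
      have hInC : InC adjZ (Set.Icc a b) g := by
        constructor
        · intro x hx
          simp only [Set.mem_Icc] at hx ⊢
          simp only [hg]
          omega
        · intro x hx x' hx' hadj
          unfold adjZ at hadj
          by_cases h : g x = g x'
          · exact Or.inl h
          · refine Or.inr ?_
            unfold adjZ
            simp only [hg] at h ⊢
            omega
      have hfixB : ∀ p ∈ B, g p = p := by
        intro p hp
        have : p = b := by
          rcases hsubB hp with rfl | rfl
          · exact absurd hp ha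
          · rfl
        subst this
        simp only [hg]
        omega
      have := hF g hInC hfixB a ⟨le_refl a, le_of_lt hab⟩
      simp only [hg] at this
      omega
    · set g : ℤ → ℤ := fun x => max (x - 1) a with hg
      have hInC : InC adjZ (Set.Icc a b) g := by
        constructor
        · intro x hx
          simp only [Set.mem_Icc] at hx ⊢
          simp only [hg]
          omega
        · intro x hx x' hx' hadj
          unfold adjZ at hadj
          by_cases h : g x = g x'
          · exact Or.inl h
          · refine Or.inr ?_
            unfold adjZ
            simp only [hg] at h ⊢
            omega
      have hfixB : ∀ p ∈ B, g p = p := by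
        intro p hp
        have : p = a := by
          rcases hsubB hp with rfl | rfl
          · rfl
          · exact absurd hp hb
        subst this
        simp only [hg]
        omega
      have := hF g hInC hfixB b ⟨le_of_lt hab, le_refl b⟩
      simp only [hg] at this
      omega
end

section
/- Let X ⊂ ℤⁿ be finite, let 1 ≤ u ≤ n, let A ⊂ X, and let f ∈ C(X,c_u). If Bd(A) ⊂ Fix(f), then A ⊂ Fix(f). -/
/-- The boundary of `A ⊆ ℤⁿ`: points of `A` that are `c₁`-adjacent to a point
of `ℤⁿ \ A`. -/
def Bd {n : ℕ} (A : Set (Fin n → ℤ)) : Set (Fin n → ℤ) :=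
  {x ∈ A | ∃ y, y ∉ A ∧ cuAdj n 1 y x}

/-- Two updates of the same point at the same coordinate with values
differing by exactly 1 are `c_u`-adjacent for any `u ≥ 1`. -/
lemma adj_update {n u : ℕ} (hu1 : 1 ≤ u) (x : Fin n → ℤ) (i : Fin n)
    (a b : ℤ) (hab : (a - b).natAbs = 1) :
    cuAdj n u (Function.update x i a) (Function.update x i b) := by
  refine ⟨?_, ?_, ?_⟩
  · intro h
    have := congrFun h i
    simp only [Function.update_self] at this
    omega
  · intro j
    by_cases hj : j = i
    · subst hj; simp only [Function.update_self]; omega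
    · simp [Function.update_of_ne hj]
  · have hsub : (Finset.univ.filter fun j =>
        Function.update x i a j ≠ Function.update x i b j) ⊆ {i} := by
      intro j hj
      simp only [Finset.mem_filter, Finset.mem_univ, true_and] at hj
      simp only [Finset.mem_singleton]
      by_contra h
      exact hj (by simp [Function.update_of_ne h])
    calc (Finset.univ.filter fun j =>
        Function.update x i a j ≠ Function.update x i b j).card
        ≤ ({i} : Finset (Fin n)).card := Finset.card_le_card hsub
      _ = 1 := Finset.card_singleton i
      _ ≤ u := hu1

/-- Per-coordinate Lipschitz bound along a straight chain inside `A`. -/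
lemma chain_bound {n u : ℕ} (hu1 : 1 ≤ u)
    (X : Set (Fin n → ℤ)) (A : Set (Fin n → ℤ)) (hA : A ⊆ X)
    (f : (Fin n → ℤ) → Fin n → ℤ) (hf : InC (cuAdj n u) X f)
    (x : Fin n → ℤ) (i : Fin n) (s : ℤ) (hs : s.natAbs = 1) :
    ∀ k : ℕ, (∀ j : ℕ, j ≤ k → Function.update x i (x i + j * s) ∈ A) →
      ∀ i', ((f x i') - (f (Function.update x i (x i + k * s)) i')).natAbs ≤ k := by
  intro k
  induction k with
  | zero =>
    intro _ i'
    simp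
  | succ k ih =>
    intro h i'
    have hp : Function.update x i (x i + (k : ℤ) * s) ∈ A :=
      h k (Nat.le_succ k)
    have hq : Function.update x i (x i + ((k : ℕ) + 1 : ℕ) * s) ∈ A :=
      h (k + 1) le_rfl
    have hdiff : ((x i + (k : ℤ) * s) - (x i + ((k : ℕ) + 1 : ℕ) * s)).natAbs = 1 := by
      have : (x i + (k : ℤ) * s) - (x i + ((k : ℕ) + 1 : ℕ) * s) = -s := by
        push_cast; ring
      rw [this, Int.natAbs_neg, hs]
    have hadj := adj_update hu1 x i _ _ hdiff
    have hstep := hf.2 _ (hA hp) _ (hA hq) hadj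
    have hstep1 : ((f (Function.update x i (x i + (k : ℤ) * s)) i') -
        (f (Function.update x i (x i + ((k : ℕ) + 1 : ℕ) * s)) i')).natAbs ≤ 1 := by
      rcases hstep with heq | hadj'
      · rw [heq]; simp
      · exact hadj'.2.1 i'
    have hprev := ih (fun j hj => h j (Nat.le_succ_of_le hj)) i'
    have htri : ((f x i') -
        (f (Function.update x i (x i + ((k : ℕ) + 1 : ℕ) * s)) i')).natAbs ≤
        ((f x i') - (f (Function.update x i (x i + (k : ℤ) * s)) i')).natAbs +
        ((f (Function.update x i (x i + (k : ℤ) * s)) i') -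
         (f (Function.update x i (x i + ((k : ℕ) + 1 : ℕ) * s)) i')).natAbs := by
      have : (f x i') - (f (Function.update x i (x i + ((k : ℕ) + 1 : ℕ) * s)) i') =
          ((f x i') - (f (Function.update x i (x i + (k : ℤ) * s)) i')) +
          ((f (Function.update x i (x i + (k : ℤ) * s)) i') -
           (f (Function.update x i (x i + ((k : ℕ) + 1 : ℕ) * s)) i')) := by ring
      rw [this]
      exact Int.natAbs_add_le _ _
    omega

/-- Walking from an interior point in direction `s·eᵢ`, we reach a boundary
point of `A`; this bounds the displacement of `f x` in coordinate `i`. -/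
lemma side_bound {n u : ℕ} (hu1 : 1 ≤ u)
    (X : Set (Fin n → ℤ)) (hfin : X.Finite) (A : Set (Fin n → ℤ)) (hA : A ⊆ X)
    (f : (Fin n → ℤ) → Fin n → ℤ) (hf : InC (cuAdj n u) X f)
    (hbd : ∀ x ∈ Bd A, f x = x) (x : Fin n → ℤ) (hx : x ∈ A)
    (i : Fin n) (s : ℤ) (hs : s = 1 ∨ s = -1) :
    ∃ m : ℕ, ((f x i) - (x i + m * s)).natAbs ≤ m := by
  classical
  have hs1 : s.natAbs = 1 := by rcases hs with h | h <;> simp [h]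
  set g : ℕ → (Fin n → ℤ) := fun k => Function.update x i (x i + k * s) with hg
  have hginj : Function.Injective g := by
    intro a b hab
    have h := congrFun hab i
    simp only [hg, Function.update_self] at h
    rcases hs with h1 | h1 <;> subst h1 <;> omega
  have hex : ∃ k, g k ∉ A := by
    by_contra h
    push_neg at h
    have hinf : (Set.range g).Infinite := Set.infinite_range_of_injective hginj
    exact hinf ((hfin.subset hA).subset (by rintro _ ⟨k, rfl⟩; exact h k))
  set k := Nat.find hex with hk
  have hkspec : g k ∉ A := Nat.find_spec hex
  have hk1 : 1 ≤ k := by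
    by_contra h
    have hk0 : k = 0 := by omega
    apply hkspec
    rw [hk0]
    have : g 0 = x := by simp [hg]
    rw [this]; exact hx
  obtain ⟨m, hm⟩ : ∃ m, k = m + 1 := ⟨k - 1, by omega⟩
  have hallA : ∀ j : ℕ, j ≤ m → g j ∈ A := by
    intro j hj
    have := Nat.find_min hex (show j < k by omega)
    exact not_not.mp this
  have hzA : g m ∈ A := hallA m le_rfl
  have hznA : g (m + 1) ∉ A := by rw [← hm]; exact hkspec
  have hadj : cuAdj n 1 (g (m + 1)) (g m) := by
    apply adj_update le_rfl
    have : (x i + ((m : ℕ) + 1 : ℕ) * s) - (x i + (m : ℤ) * s) = s := by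
      push_cast; ring
    rw [this, hs1]
  have hzBd : g m ∈ Bd A := ⟨hzA, g (m + 1), hznA, hadj⟩
  have hfz : f (g m) = g m := hbd _ hzBd
  have hchain := chain_bound hu1 X A hA f hf x i s hs1 m hallA i
  rw [hfz] at hchain
  simp only [hg, Function.update_self] at hchain
  exact ⟨m, hchain⟩

/-- For finite `X ⊆ ℤⁿ`, `A ⊆ X`, and `f ∈ C(X,c_u)`: if `f` fixes `Bd(A)`
pointwise then `f` fixes `A` pointwise. -/
theorem stmt8 {n u : ℕ} (hu1 : 1 ≤ u) (hun : u ≤ n)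
    (X : Set (Fin n → ℤ)) (hfin : X.Finite) (A : Set (Fin n → ℤ)) (hA : A ⊆ X)
    (f : (Fin n → ℤ) → Fin n → ℤ) (hf : InC (cuAdj n u) X f)
    (hbd : ∀ x ∈ Bd A, f x = x) :
    ∀ x ∈ A, f x = x := by
  intro x hx
  funext i
  obtain ⟨m₁, h₁⟩ := side_bound hu1 X hfin A hA f hf hbd x hx i 1 (Or.inl rfl)
  obtain ⟨m₂, h₂⟩ := side_bound hu1 X hfin A hA f hf hbd x hx i (-1) (Or.inr rfl)
  simp only [mul_one] at h₁
  have h₂' : ((f x i) - (x i - m₂)).natAbs ≤ m₂ := by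
    have : x i + (m₂ : ℤ) * (-1) = x i - m₂ := by ring
    rwa [this] at h₂
  omega
end

section
/- Let X ⊂ ℤⁿ be finite. Then for every u with 1 ≤ u ≤ n, Bd(X) is a freezing set for (X,c_u). -/
lemma cuAdj_update {n u : ℕ} (hu : 1 ≤ u) (x : Fin n → ℤ) (i : Fin n)
    {d : ℤ} (hd : d = 1 ∨ d = -1) :
    cuAdj n u (Function.update x i (x i + d)) x := by
  refine ⟨?_, ?_, ?_⟩
  · intro h
    have h' := congrFun h i
    rw [Function.update_self] at h'
    rcases hd with rfl | rfl <;> omega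
  · intro j
    by_cases hj : j = i
    · subst hj
      rw [Function.update_self]
      rcases hd with rfl | rfl <;> simp
    · rw [Function.update_of_ne hj]
      simp
  · have hsub : (Finset.univ.filter fun j => Function.update x i (x i + d) j ≠ x j)
        ⊆ {i} := by
      intro j hj
      simp only [Finset.mem_filter] at hj
      by_contra hji
      simp only [Finset.mem_singleton] at hji
      exact hj.2 (by rw [Function.update_of_ne hji])
    calc (Finset.univ.filter fun j => Function.update x i (x i + d) j ≠ x j).card
        ≤ ({i} : Finset (Fin n)).card := Finset.card_le_card hsub
      _ = 1 := Finset.card_singleton i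
      _ ≤ u := hu

lemma stmt9_aux {n u : ℕ} (hu1 : 1 ≤ u) (X : Set (Fin n → ℤ))
    (f : (Fin n → ℤ) → (Fin n → ℤ))
    (hf : DigCont (cuAdj n u) (cuAdj n u) X f)
    (hfix : ∀ a ∈ Bd X, f a = a) (i : Fin n) (d : ℤ) (hd : d = 1 ∨ d = -1)
    (B : ℤ) (hB : ∀ z ∈ X, d * z i ≤ B) :
    ∀ k : ℕ, ∀ x, x ∈ X → (B - d * x i).toNat ≤ k → d * x i ≤ d * f x i := by
  have h3 : d * d = 1 := by rcases hd with rfl | rfl <;> norm_num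
  intro k
  induction k with
  | zero =>
    intro x hx hk
    by_cases hy : Function.update x i (x i + d) ∈ X
    · exfalso
      have h1 := hB _ hy
      rw [Function.update_self] at h1
      have h2 : d * (x i + d) = d * x i + 1 := by rw [mul_add, h3]
      omega
    · have hbd : x ∈ Bd X := ⟨hx, _, hy, cuAdj_update le_rfl x i hd⟩
      rw [hfix x hbd]
  | succ k ih =>
    intro x hx hk
    by_cases hy : Function.update x i (x i + d) ∈ X
    · set y := Function.update x i (x i + d) with hydef
      have hyi : d * y i = d * x i + 1 := by
        rw [hydef, Function.update_self, mul_add, h3]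
      have hmeas : (B - d * y i).toNat ≤ k := by
        have h1 := hB _ hy
        omega
      have hih := ih y hy hmeas
      have hadj := hf x hx y hy (cuAdj_symm (cuAdj_update hu1 x i hd))
      have habs : (f x i - f y i).natAbs ≤ 1 := by
        rcases hadj with h | h
        · rw [h]; simp
        · exact h.2.1 i
      rcases hd with rfl | rfl <;> omega
    · have hbd : x ∈ Bd X := ⟨hx, _, hy, cuAdj_update le_rfl x i hd⟩
      rw [hfix x hbd]

/-- For finite `X ⊆ ℤⁿ` and `1 ≤ u ≤ n`, `Bd(X)` is a freezing set for
`(X,c_u)`. -/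
theorem stmt9 {n u : ℕ} (hu1 : 1 ≤ u) (hun : u ≤ n)
    (X : Set (Fin n → ℤ)) (hfin : X.Finite) :
    FreezingSet (cuAdj n u) X (Bd X) := by
  intro f hf hfix x hx
  funext i
  obtain ⟨B, hB⟩ := (hfin.image (fun z => z i)).bddAbove
  obtain ⟨C, hC⟩ := (hfin.image (fun z => z i)).bddBelow
  have hB' : ∀ z ∈ X, (1 : ℤ) * z i ≤ B := by
    intro z hz
    simpa using hB (Set.mem_image_of_mem _ hz)
  have hC' : ∀ z ∈ X, (-1 : ℤ) * z i ≤ -C := by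
    intro z hz
    have := hC (Set.mem_image_of_mem (fun z => z i) hz)
    simp only [neg_one_mul]
    omega
  have h1 := stmt9_aux hu1 X f hf.2 hfix i 1 (Or.inl rfl) B hB'
    (B - 1 * x i).toNat x hx le_rfl
  have h2 := stmt9_aux hu1 X f hf.2 hfix i (-1) (Or.inr rfl) (-C) hC'
    (-C - (-1) * x i).toNat x hx le_rfl
  omega
end

section
/- Let X = [0,1]_ℤ³ ⊂ ℤ³ and let A = {(0,0,0), (0,1,1), (1,0,1), (1,1,0)}. Then A is a minimal freezing set for (X,c₁). -/
instance (n u : ℕ) (x y : Fin n → ℤ) : Decidable (cuAdj n u x y) := by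
  unfold cuAdj; infer_instance

lemma mem8 {x : Fin 3 → ℤ} (hx : ∀ i, x i = 0 ∨ x i = 1) :
    x = ![0,0,0] ∨ x = ![0,0,1] ∨ x = ![0,1,0] ∨ x = ![0,1,1] ∨
    x = ![1,0,0] ∨ x = ![1,0,1] ∨ x = ![1,1,0] ∨ x = ![1,1,1] := by
  have hy : x = ![x 0, x 1, x 2] := by
    funext i; fin_cases i <;> rfl
  rcases hx 0 with h0|h0 <;> rcases hx 1 with h1|h1 <;> rcases hx 2 with h2|h2 <;>
    rw [hy, h0, h1, h2] <;> decide

lemma fix111 (y : Fin 3 → ℤ) (hy : ∀ i, y i = 0 ∨ y i = 1)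
    (h1 : y = ![0,1,1] ∨ cuAdj 3 1 y ![0,1,1])
    (h2 : y = ![1,0,1] ∨ cuAdj 3 1 y ![1,0,1])
    (h3 : y = ![1,1,0] ∨ cuAdj 3 1 y ![1,1,0]) : y = ![1,1,1] := by
  rcases mem8 hy with rfl|rfl|rfl|rfl|rfl|rfl|rfl|rfl <;> revert h1 h2 h3 <;> decide

lemma fix001 (y : Fin 3 → ℤ) (hy : ∀ i, y i = 0 ∨ y i = 1)
    (h1 : y = ![0,0,0] ∨ cuAdj 3 1 y ![0,0,0])
    (h2 : y = ![0,1,1] ∨ cuAdj 3 1 y ![0,1,1])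
    (h3 : y = ![1,0,1] ∨ cuAdj 3 1 y ![1,0,1]) : y = ![0,0,1] := by
  rcases mem8 hy with rfl|rfl|rfl|rfl|rfl|rfl|rfl|rfl <;> revert h1 h2 h3 <;> decide

lemma fix010 (y : Fin 3 → ℤ) (hy : ∀ i, y i = 0 ∨ y i = 1)
    (h1 : y = ![0,0,0] ∨ cuAdj 3 1 y ![0,0,0])
    (h2 : y = ![0,1,1] ∨ cuAdj 3 1 y ![0,1,1])
    (h3 : y = ![1,1,0] ∨ cuAdj 3 1 y ![1,1,0]) : y = ![0,1,0] := by
  rcases mem8 hy with rfl|rfl|rfl|rfl|rfl|rfl|rfl|rfl <;> revert h1 h2 h3 <;> decide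

lemma fix100 (y : Fin 3 → ℤ) (hy : ∀ i, y i = 0 ∨ y i = 1)
    (h1 : y = ![0,0,0] ∨ cuAdj 3 1 y ![0,0,0])
    (h2 : y = ![1,0,1] ∨ cuAdj 3 1 y ![1,0,1])
    (h3 : y = ![1,1,0] ∨ cuAdj 3 1 y ![1,1,0]) : y = ![1,0,0] := by
  rcases mem8 hy with rfl|rfl|rfl|rfl|rfl|rfl|rfl|rfl <;> revert h1 h2 h3 <;> decide

/-- counterexample when `![0,0,0]` is missing -/
def f000 : (Fin 3 → ℤ) → Fin 3 → ℤ := fun x =>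
  if x = ![0,0,0] then ![0,1,1] else if x = ![1,0,0] then ![1,1,1] else x

/-- counterexample when `![0,1,1]` is missing -/
def f011 : (Fin 3 → ℤ) → Fin 3 → ℤ := fun x =>
  if x = ![0,1,1] then ![0,0,0] else if x = ![1,1,1] then ![1,0,0] else x

/-- counterexample when `![1,0,1]` is missing -/
def f101 : (Fin 3 → ℤ) → Fin 3 → ℤ := fun x =>
  if x = ![1,0,0] then ![0,1,0] else if x = ![1,0,1] then ![0,1,1] else x

/-- counterexample when `![1,1,0]` is missing -/
def f110 : (Fin 3 → ℤ) → Fin 3 → ℤ := fun x =>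
  if x = ![0,1,0] then ![0,0,1] else if x = ![1,1,0] then ![1,0,1] else x

/-- `A = {(0,0,0), (0,1,1), (1,0,1), (1,1,0)}` is a minimal freezing set for
the unit cube `([0,1]_ℤ³, c₁)`. -/
theorem stmt11 (X A : Set (Fin 3 → ℤ))
    (hX : X = {x | ∀ i, x i = 0 ∨ x i = 1})
    (hA : A = {![0, 0, 0], ![0, 1, 1], ![1, 0, 1], ![1, 1, 0]}) :
    FreezingSet (cuAdj 3 1) X A ∧
    ∀ B ⊂ A, ¬ FreezingSet (cuAdj 3 1) X B := by
  subst hX hA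
  constructor
  · -- freezing
    intro f hf hfix x hx
    have h000 : f ![0,0,0] = ![0,0,0] := hfix _ (by left; rfl)
    have h011 : f ![0,1,1] = ![0,1,1] := hfix _ (by right; left; rfl)
    have h101 : f ![1,0,1] = ![1,0,1] := hfix _ (by right; right; left; rfl)
    have h110 : f ![1,1,0] = ![1,1,0] := hfix _ (by right; right; right; rfl)
    have hfx : ∀ i, f x i = 0 ∨ f x i = 1 := hf.1 hx
    have hcont := hf.2
    rcases mem8 hx with rfl|rfl|rfl|rfl|rfl|rfl|rfl|rfl
    · exact h000
    · -- (0,0,1)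
      refine fix001 _ hfx ?_ ?_ ?_
      · have := hcont _ (by decide) _ (by decide) (by decide : cuAdj 3 1 ![0,0,1] ![0,0,0])
        rwa [h000] at this
      · have := hcont _ (by decide) _ (by decide) (by decide : cuAdj 3 1 ![0,0,1] ![0,1,1])
        rwa [h011] at this
      · have := hcont _ (by decide) _ (by decide) (by decide : cuAdj 3 1 ![0,0,1] ![1,0,1])
        rwa [h101] at this
    · -- (0,1,0)
      refine fix010 _ hfx ?_ ?_ ?_
      · have := hcont _ (by decide) _ (by decide) (by decide : cuAdj 3 1 ![0,1,0] ![0,0,0])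
        rwa [h000] at this
      · have := hcont _ (by decide) _ (by decide) (by decide : cuAdj 3 1 ![0,1,0] ![0,1,1])
        rwa [h011] at this
      · have := hcont _ (by decide) _ (by decide) (by decide : cuAdj 3 1 ![0,1,0] ![1,1,0])
        rwa [h110] at this
    · exact h011
    · -- (1,0,0)
      refine fix100 _ hfx ?_ ?_ ?_
      · have := hcont _ (by decide) _ (by decide) (by decide : cuAdj 3 1 ![1,0,0] ![0,0,0])
        rwa [h000] at this
      · have := hcont _ (by decide) _ (by decide) (by decide : cuAdj 3 1 ![1,0,0] ![1,0,1])
        rwa [h101] at this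
      · have := hcont _ (by decide) _ (by decide) (by decide : cuAdj 3 1 ![1,0,0] ![1,1,0])
        rwa [h110] at this
    · exact h101
    · exact h110
    · -- (1,1,1)
      refine fix111 _ hfx ?_ ?_ ?_
      · have := hcont _ (by decide) _ (by decide) (by decide : cuAdj 3 1 ![1,1,1] ![0,1,1])
        rwa [h011] at this
      · have := hcont _ (by decide) _ (by decide) (by decide : cuAdj 3 1 ![1,1,1] ![1,0,1])
        rwa [h101] at this
      · have := hcont _ (by decide) _ (by decide) (by decide : cuAdj 3 1 ![1,1,1] ![1,1,0])
        rwa [h110] at this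
  · -- minimality
    intro B hB hF
    obtain ⟨a, haA, haB⟩ := Set.exists_of_ssubset hB
    have hBsub : B ⊆ ({![0, 0, 0], ![0, 1, 1], ![1, 0, 1], ![1, 1, 0]} : Set (Fin 3 → ℤ)) := hB.1
    have key : ∀ g : (Fin 3 → ℤ) → Fin 3 → ℤ, InC (cuAdj 3 1) {x | ∀ i, x i = 0 ∨ x i = 1} g →
        (∀ b ∈ B, g b = b) → ∀ x ∈ ({x | ∀ i, x i = 0 ∨ x i = 1} : Set (Fin 3 → ℤ)), g x = x :=
      hF
    rcases haA with rfl | rfl | rfl | rfl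
    · -- a = ![0,0,0], use f000
      have hInC : InC (cuAdj 3 1) {x | ∀ i, x i = 0 ∨ x i = 1} f000 := by
        constructor
        · intro x hx
          rcases mem8 hx with rfl|rfl|rfl|rfl|rfl|rfl|rfl|rfl <;> decide
        · intro x hx x' hx' hadj
          rcases mem8 hx with rfl|rfl|rfl|rfl|rfl|rfl|rfl|rfl <;>
            rcases mem8 hx' with rfl|rfl|rfl|rfl|rfl|rfl|rfl|rfl <;> revert hadj <;> decide
      have hfixB : ∀ b ∈ B, f000 b = b := by
        intro b hb
        rcases hBsub hb with rfl | rfl | rfl | rfl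
        · exact absurd hb haB
        · decide
        · decide
        · decide
      have := key f000 hInC hfixB ![0,0,0] (by decide)
      exact absurd this (by decide)
    · -- a = ![0,1,1], use f011
      have hInC : InC (cuAdj 3 1) {x | ∀ i, x i = 0 ∨ x i = 1} f011 := by
        constructor
        · intro x hx
          rcases mem8 hx with rfl|rfl|rfl|rfl|rfl|rfl|rfl|rfl <;> decide
        · intro x hx x' hx' hadj
          rcases mem8 hx with rfl|rfl|rfl|rfl|rfl|rfl|rfl|rfl <;>
            rcases mem8 hx' with rfl|rfl|rfl|rfl|rfl|rfl|rfl|rfl <;> revert hadj <;> decide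
      have hfixB : ∀ b ∈ B, f011 b = b := by
        intro b hb
        rcases hBsub hb with rfl | rfl | rfl | rfl
        · decide
        · exact absurd hb haB
        · decide
        · decide
      have := key f011 hInC hfixB ![0,1,1] (by decide)
      exact absurd this (by decide)
    · -- a = ![1,0,1], use f101
      have hInC : InC (cuAdj 3 1) {x | ∀ i, x i = 0 ∨ x i = 1} f101 := by
        constructor
        · intro x hx
          rcases mem8 hx with rfl|rfl|rfl|rfl|rfl|rfl|rfl|rfl <;> decide
        · intro x hx x' hx' hadj
          rcases mem8 hx with rfl|rfl|rfl|rfl|rfl|rfl|rfl|rfl <;>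
            rcases mem8 hx' with rfl|rfl|rfl|rfl|rfl|rfl|rfl|rfl <;> revert hadj <;> decide
      have hfixB : ∀ b ∈ B, f101 b = b := by
        intro b hb
        rcases hBsub hb with rfl | rfl | rfl | rfl
        · decide
        · decide
        · exact absurd hb haB
        · decide
      have := key f101 hInC hfixB ![1,0,1] (by decide)
      exact absurd this (by decide)
    · -- a = ![1,1,0], use f110
      have hInC : InC (cuAdj 3 1) {x | ∀ i, x i = 0 ∨ x i = 1} f110 := by
        constructor
        · intro x hx
          rcases mem8 hx with rfl|rfl|rfl|rfl|rfl|rfl|rfl|rfl <;> decide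
        · intro x hx x' hx' hadj
          rcases mem8 hx with rfl|rfl|rfl|rfl|rfl|rfl|rfl|rfl <;>
            rcases mem8 hx' with rfl|rfl|rfl|rfl|rfl|rfl|rfl|rfl <;> revert hadj <;> decide
      have hfixB : ∀ b ∈ B, f110 b = b := by
        intro b hb
        rcases hBsub hb with rfl | rfl | rfl | rfl
        · decide
        · decide
        · decide
        · exact absurd hb haB
      have := key f110 hInC hfixB ![1,1,0] (by decide)
      exact absurd this (by decide)
end

section
/- Let X = ∏_{i=1}^n [0,m_i]_ℤ ⊂ ℤⁿ, where m_i > 1 for all i. Then Bd(X) is a minimal freezing set for (X,c_n). -/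
/-! ### Auxiliary material -/

/-- The digital cube. -/
def Xcube {n : ℕ} (m : Fin n → ℤ) : Set (Fin n → ℤ) :=
  {x | ∀ i, x i ∈ Set.Icc 0 (m i)}

lemma cardle {n : ℕ} (p : Fin n → Prop) [DecidablePred p] :
    (Finset.univ.filter p).card ≤ n := by
  calc (Finset.univ.filter p).card ≤ Finset.univ.card := Finset.card_filter_le _ _
    _ = n := by simp

/-- Points of the cube with a coordinate equal to `0` or `m i` are in the boundary. -/
lemma mem_bd_of {n : ℕ} (m : Fin n → ℤ) {q : Fin n → ℤ} (hq : q ∈ Xcube m)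
    (i : Fin n) (h : q i = 0 ∨ q i = m i) : q ∈ Bd (Xcube m) := by
  classical
  have hqi := hq i
  simp only [Xcube, Set.mem_setOf_eq, Set.mem_Icc] at hqi
  set d : ℤ := if q i = 0 then -1 else 1 with hd
  refine ⟨hq, Function.update q i (q i + d), ?_, ?_, ?_, ?_⟩
  · intro hy
    have := hy i
    simp only [Xcube, Set.mem_setOf_eq, Set.mem_Icc, Function.update_self] at this
    rcases h with h | h <;> simp [hd, h] at this <;> omega
  · intro he
    have := congrFun he i
    simp only [Function.update_self, hd] at this
    split_ifs at this <;> omega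
  · intro j
    by_cases hj : j = i
    · subst hj
      simp only [Function.update_self, hd]
      split_ifs <;> simp
    · simp [Function.update_of_ne hj]
  · have hsub : (Finset.univ.filter fun j => Function.update q i (q i + d) j ≠ q j) ⊆ {i} := by
      intro j hj
      simp only [Finset.mem_filter] at hj
      by_contra hji
      simp only [Finset.mem_singleton] at hji
      exact hj.2 (Function.update_of_ne hji _ _)
    calc _ ≤ ({i} : Finset (Fin n)).card := Finset.card_le_card hsub
      _ = 1 := by simp

/-- A boundary point of the cube has a coordinate equal to `0` or `m i`. -/
lemma bd_coord {n : ℕ} (m : Fin n → ℤ) {q : Fin n → ℤ} (hq : q ∈ Bd (Xcube m)) :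
    ∃ i, q i = 0 ∨ q i = m i := by
  obtain ⟨hqX, y, hyX, _, hco, _⟩ := hq
  have : ∃ j, ¬ (0 ≤ y j ∧ y j ≤ m j) := by
    by_contra h
    push_neg at h
    exact hyX (fun j => Set.mem_Icc.mpr ⟨(h j).1, (h j).2⟩)
  obtain ⟨j, hj⟩ := this
  have h1 := hqX j
  simp only [Xcube, Set.mem_setOf_eq, Set.mem_Icc] at h1
  have h2 := hco j
  exact ⟨j, by omega⟩

/-- The freezing part. -/
lemma freezing_cube {n : ℕ} (m : Fin n → ℤ) :
    FreezingSet (cuAdj n n) (Xcube m) (Bd (Xcube m)) := by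
  rintro f ⟨hmap, hcont⟩ hfix x hx
  have step : ∀ x ∈ Xcube m, ∀ x' ∈ Xcube m, cuAdj n n x x' →
      ∀ i, (f x i - f x' i).natAbs ≤ 1 := by
    intro x hx x' hx' hadj i
    rcases hcont x hx x' hx' hadj with h | h
    · simp [h]
    · exact h.2.1 i
  have hle : ∀ k : ℕ, ∀ i : Fin n, ∀ x ∈ Xcube m, x i = (k : ℤ) → f x i ≤ x i := by
    intro k
    induction k with
    | zero =>
      intro i x hx h0
      have hb : x ∈ Bd (Xcube m) := mem_bd_of m hx i (Or.inl (by exact_mod_cast h0))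
      rw [hfix x hb]
    | succ k ih =>
      intro i x hx hk
      set x' := Function.update x i (x i - 1) with hx'def
      have hx'X : x' ∈ Xcube m := by
        intro j
        have h1 := hx j
        have h2 := hx i
        simp only [Xcube, Set.mem_setOf_eq, Set.mem_Icc] at h1 h2 ⊢
        by_cases hj : j = i
        · subst hj
          simp only [x', Function.update_self]
          omega
        · simp only [x', Function.update_of_ne hj]
          exact h1
      have hadj : cuAdj n n x x' := by
        refine ⟨?_, ?_, cardle _⟩
        · intro he
          have := congrFun he i
          simp only [x', Function.update_self] at this
          omega
        · intro j
          by_cases hj : j = i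
          · subst hj; simp [x', Function.update_self]
          · simp [x', Function.update_of_ne hj]
      have hstep := step x hx x' hx'X hadj i
      have hih : f x' i ≤ x' i := by
        refine ih i x' hx'X ?_
        simp only [x', Function.update_self]
        push_cast at hk ⊢
        omega
      have hxi' : x' i = x i - 1 := by simp [x', Function.update_self]
      omega
  have hge : ∀ k : ℕ, ∀ i : Fin n, ∀ x ∈ Xcube m, x i = m i - (k : ℤ) → x i ≤ f x i := by
    intro k
    induction k with
    | zero =>
      intro i x hx h0
      have hb : x ∈ Bd (Xcube m) := mem_bd_of m hx i (Or.inr (by push_cast at h0; omega))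
      rw [hfix x hb]
    | succ k ih =>
      intro i x hx hk
      set x' := Function.update x i (x i + 1) with hx'def
      have h2 := hx i
      simp only [Xcube, Set.mem_setOf_eq, Set.mem_Icc] at h2
      have hx'X : x' ∈ Xcube m := by
        intro j
        have h1 := hx j
        simp only [Xcube, Set.mem_setOf_eq, Set.mem_Icc] at h1 ⊢
        by_cases hj : j = i
        · subst hj
          simp only [x', Function.update_self]
          push_cast at hk
          omega
        · simp only [x', Function.update_of_ne hj]
          exact h1
      have hadj : cuAdj n n x x' := by
        refine ⟨?_, ?_, cardle _⟩
        · intro he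
          have := congrFun he i
          simp only [x', Function.update_self] at this
          omega
        · intro j
          by_cases hj : j = i
          · subst hj; simp [x', Function.update_self]
          · simp [x', Function.update_of_ne hj]
      have hstep := step x hx x' hx'X hadj i
      have hih : x' i ≤ f x' i := by
        refine ih i x' hx'X ?_
        simp only [x', Function.update_self]
        push_cast at hk ⊢
        omega
      have hxi' : x' i = x i + 1 := by simp [x', Function.update_self]
      omega
  funext i
  have h1 := hx i
  simp only [Xcube, Set.mem_setOf_eq, Set.mem_Icc] at h1
  have hL := hle (x i).toNat i x hx (by omega)
  have hG := hge (m i - x i).toNat i x hx (by omega)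
  omega

/-- The minimality part. -/
lemma minimal_cube {n : ℕ} (m : Fin n → ℤ) (hm : ∀ i, 1 < m i) :
    ∀ B ⊂ Bd (Xcube m), ¬ FreezingSet (cuAdj n n) (Xcube m) B := by
  classical
  intro B hB hF
  obtain ⟨q, hqBd, hqB⟩ := Set.exists_of_ssubset hB
  have hqX : q ∈ Xcube m := hqBd.1
  set q' : Fin n → ℤ := fun i => if q i = 0 then 1 else if q i = m i then m i - 1 else q i
    with hq'def
  have hq'X : q' ∈ Xcube m := by
    intro j
    have h1 := hqX j
    have h2 := hm j
    simp only [Xcube, Set.mem_setOf_eq, Set.mem_Icc, q'] at h1 ⊢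
    split_ifs <;> omega
  have hq'ne : q' ≠ q := by
    obtain ⟨i, hi⟩ := bd_coord m hqBd
    intro h
    have hci := congrFun h i
    have hmi := hm i
    simp only [q'] at hci
    rcases hi with h0 | h0
    · rw [h0] at hci; simp at hci
    · have hne0 : q i ≠ 0 := by omega
      rw [if_neg hne0, if_pos h0] at hci
      omega
  -- key coordinate bound
  have key : ∀ x : Fin n → ℤ, x ∈ Xcube m → (∀ j, (x j - q j).natAbs ≤ 1) →
      ∀ j, (x j - q' j).natAbs ≤ 1 := by
    intro x hxX hadj j
    have h1 := hxX j
    have h2 := hqX j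
    have h3 := hadj j
    simp only [Xcube, Set.mem_setOf_eq, Set.mem_Icc] at h1 h2
    simp only [q']
    split_ifs <;> omega
  set f : (Fin n → ℤ) → (Fin n → ℤ) := fun x => if x = q then q' else x with hfdef
  have hfC : InC (cuAdj n n) (Xcube m) f := by
    constructor
    · intro x hx
      by_cases h : x = q <;> simp [f, h, hq'X, hx]
    · intro x hx x' hx' hadj
      by_cases h1 : x = q <;> by_cases h2 : x' = q
      · exact absurd (h1.trans h2.symm) hadj.1
      · subst h1
        simp only [f, if_pos rfl, if_neg h2]
        by_cases he : q' = x'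
        · exact Or.inl he
        · refine Or.inr ⟨he, ?_, cardle _⟩
          intro j
          have := key x' hx' (fun j => by have := hadj.2.1 j; omega) j
          omega
      · subst h2
        simp only [f, if_pos rfl, if_neg h1]
        by_cases he : x = q'
        · exact Or.inl he
        · refine Or.inr ⟨he, ?_, cardle _⟩
          intro j
          have := key x hx (fun j => hadj.2.1 j) j
          omega
      · simp only [f, if_neg h1, if_neg h2]
        exact Or.inr hadj
  have hfixB : ∀ a ∈ B, f a = a := by
    intro a ha
    have : a ≠ q := fun h => hqB (h ▸ ha)
    simp [f, this]
  have := hF f hfC hfixB q hqX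
  simp only [f, if_pos rfl] at this
  exact hq'ne this

/-- For the digital cube `X = ∏ [0,mᵢ]_ℤ ⊆ ℤⁿ` with every `mᵢ > 1`, `Bd(X)`
is a minimal freezing set for `(X,c_n)`. -/
theorem stmt12 {n : ℕ} (m : Fin n → ℤ) (hm : ∀ i, 1 < m i)
    (X : Set (Fin n → ℤ)) (hX : X = {x | ∀ i, x i ∈ Set.Icc 0 (m i)}) :
    FreezingSet (cuAdj n n) X (Bd X) ∧
    ∀ B ⊂ Bd X, ¬ FreezingSet (cuAdj n n) X B := by
  subst hX
  exact ⟨freezing_cube m, minimal_cube m hm⟩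
end

section
/- Let n > 4 and let C_n be a digital cycle of n points. Let x_i, x_j, x_k be distinct members of C_n such that C_n is the union of the unique shorter paths determined by the pairs (x_i,x_j), (x_j,x_k), (x_k,x_i). Then for f ∈ C(C_n,κ), f = id_{C_n} if and only if {x_i, x_j, x_k} ⊂ Fix(f); i.e., {x_i, x_j, x_k} is a freezing set for C_n. Moreover, this freezing set is minimal. -/
/-- A walk on `ZMod n` with steps of size at most `1` which starts and ends
at the two ends of an arc of length `d < n/2` must be the identity walk. -/
lemma walk_rigid {n : ℕ} [NeZero n] (F : ZMod n → ZMod n)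
    (hstep : ∀ i : ZMod n, ∃ δ : ℤ, δ.natAbs ≤ 1 ∧ F (i + 1) = F i + (δ : ZMod n))
    (u : ZMod n) (d : ℕ) (hd : 2 * d < n)
    (h0 : F u = u) (hd' : F (u + (d : ZMod n)) = u + (d : ZMod n)) :
    ∀ t ≤ d, F (u + (t : ZMod n)) = u + (t : ZMod n) := by
  have fwd : ∀ t : ℕ, ∃ s : ℤ, s.natAbs ≤ t ∧ F (u + (t : ZMod n)) = u + (s : ZMod n) := by
    intro t
    induction t with
    | zero => exact ⟨0, by simp, by simpa using h0⟩
    | succ t ih =>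
      obtain ⟨s, hs1, hs2⟩ := ih
      obtain ⟨δ, hδ1, hδ2⟩ := hstep (u + (t : ZMod n))
      refine ⟨s + δ, by omega, ?_⟩
      have h : u + ((t + 1 : ℕ) : ZMod n) = (u + (t : ZMod n)) + 1 := by push_cast; ring
      rw [h, hδ2, hs2]; push_cast; ring
  have bwd : ∀ r : ℕ, ∀ t : ℕ, t + r = d →
      ∃ s : ℤ, s.natAbs ≤ r ∧ F (u + (t : ZMod n)) = u + (d : ZMod n) + (s : ZMod n) := by
    intro r
    induction r with
    | zero =>
      intro t ht
      have : t = d := by omega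
      subst this
      exact ⟨0, by simp, by simpa using hd'⟩
    | succ r ih =>
      intro t ht
      obtain ⟨s, hs1, hs2⟩ := ih (t + 1) (by omega)
      obtain ⟨δ, hδ1, hδ2⟩ := hstep (u + (t : ZMod n))
      have h : u + ((t + 1 : ℕ) : ZMod n) = (u + (t : ZMod n)) + 1 := by push_cast; ring
      rw [h, hδ2] at hs2
      refine ⟨s - δ, by omega, ?_⟩
      have : F (u + (t : ZMod n)) = u + (d : ZMod n) + (s : ZMod n) - (δ : ZMod n) := by
        rw [← hs2]; ring
      rw [this]; push_cast; ring
  intro t ht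
  obtain ⟨s, hs1, hs2⟩ := fwd t
  obtain ⟨s', hs1', hs2'⟩ := bwd (d - t) t (by omega)
  have hcast : ((s : ℤ) : ZMod n) = (((d : ℤ) + s' : ℤ) : ZMod n) := by
    have := hs2.symm.trans hs2'
    have h2 : (s : ZMod n) = (d : ZMod n) + (s' : ZMod n) := by
      have h' : u + (s : ZMod n) = u + ((d : ZMod n) + (s' : ZMod n)) := by
        rw [this]; ring
      exact add_left_cancel h'
    rw [h2]; push_cast; ring
  have hdvd : (n : ℤ) ∣ ((d : ℤ) + s' - s) := by
    have := (ZMod.intCast_eq_intCast_iff _ _ _).mp hcast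
    exact this.dvd
  have hzero : (d : ℤ) + s' - s = 0 := by
    apply Int.eq_zero_of_abs_lt_dvd hdvd
    rw [abs_lt]
    constructor <;> [skip; skip] <;> omega
  have hs : s = t := by omega
  rw [hs2, hs]; norm_cast

/-- The fold map on a digital cycle: it fixes the arc from `x u` to `x (u+d)`
(with `1 ≤ d`, `2d < n`) and folds the rest of the cycle onto that arc.  It is
continuous, fixes `x u` and `x (u+d)`, and is not the identity. -/
lemma fold_map {N n : ℕ} (hn : 4 < n) [NeZero n]
    (x : ZMod n → (Fin N → ℤ)) (hinj : Function.Injective x)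
    (C : Set (Fin N → ℤ)) (hC : C = Set.range x)
    (κ : (Fin N → ℤ) → (Fin N → ℤ) → Prop)
    (hadj : ∀ i j : ZMod n, κ (x i) (x j) ↔ (j = i + 1 ∨ i = j + 1))
    (u : ZMod n) (d : ℕ) (hd1 : 1 ≤ d) (hd2 : 2 * d < n) :
    ∃ f, InC κ C f ∧ f (x u) = x u ∧ f (x (u + (d : ZMod n))) = x (u + (d : ZMod n)) ∧
      ∃ p ∈ C, f p ≠ p := by
  classical
  set ψ : ℕ → ℕ := fun t => if t ≤ d then t else 2 * d - t with hψ
  set f : (Fin N → ℤ) → (Fin N → ℤ) :=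
    fun p => if h : ∃ i, x i = p then
      x (u + ((ψ ((Classical.choose h - u).val) : ℕ) : ZMod n)) else p with hf
  have heval : ∀ i : ZMod n, f (x i) = x (u + ((ψ ((i - u).val) : ℕ) : ZMod n)) := by
    intro i
    have h : ∃ j, x j = x i := ⟨i, rfl⟩
    have hch : Classical.choose h = i := hinj (Classical.choose_spec h)
    simp only [hf, dif_pos h, hch]
  have hψstep : ∀ t : ℕ, ψ (t + 1) = ψ t + 1 ∨ ψ t = ψ (t + 1) + 1 ∨ ψ t = ψ (t + 1) := by
    intro t; simp only [hψ]; split_ifs <;> omega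
  have hcont1 : ∀ i : ZMod n, f (x i) = f (x (i + 1)) ∨ κ (f (x i)) (f (x (i + 1))) := by
    intro i
    rw [heval i, heval (i + 1)]
    set t := (i - u).val with ht
    have htn : t < n := ZMod.val_lt _
    have hiu : ((t : ℕ) : ZMod n) = i - u := ZMod.natCast_rightInverse _
    have h1 : i + 1 - u = ((t + 1 : ℕ) : ZMod n) := by
      push_cast; rw [hiu]; ring
    by_cases hcase : t + 1 < n
    · have hval : ((i + 1) - u).val = t + 1 := by rw [h1, ZMod.val_cast_of_lt hcase]
      rw [hval]
      rcases hψstep t with h | h | h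
      · right; rw [hadj]; left; rw [h]; push_cast; ring
      · right; rw [hadj]; right; rw [h]; push_cast; ring
      · left; rw [h]
    · have htn1 : t = n - 1 := by omega
      have hval : ((i + 1) - u).val = 0 := by
        rw [h1, show t + 1 = n by omega]
        simp
      have hψ0 : ψ 0 = 0 := by simp [hψ]
      have hψt : ψ t = 0 := by
        simp only [hψ]
        rw [if_neg (by omega)]
        omega
      left; rw [hval, hψt, hψ0]
  refine ⟨f, ⟨?_, ?_⟩, ?_, ?_, ?_⟩
  · -- MapsTo
    intro p hp
    rw [hC] at hp
    obtain ⟨i, rfl⟩ := hp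
    rw [hC, heval]
    exact ⟨_, rfl⟩
  · -- continuity
    intro p hp p' hp' hκ
    rw [hC] at hp hp'
    obtain ⟨i, rfl⟩ := hp
    obtain ⟨j, rfl⟩ := hp'
    rcases (hadj i j).mp hκ with h | h
    · subst h; exact hcont1 i
    · subst h
      rcases hcont1 j with h | h
      · exact Or.inl h.symm
      · right
        rw [heval, heval] at h ⊢
        rw [hadj] at h ⊢
        tauto
  · -- fixes x u
    rw [heval]
    have : (u - u).val = 0 := by simp
    rw [this]
    simp [hψ]
  · -- fixes x (u + d)
    rw [heval]
    have h0 : u + (d : ZMod n) - u = (d : ZMod n) := by ring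
    rw [h0, ZMod.val_cast_of_lt (by omega : d < n)]
    simp [hψ]
  · -- not the identity
    refine ⟨x (u + ((d + 1 : ℕ) : ZMod n)), by rw [hC]; exact ⟨_, rfl⟩, ?_⟩
    rw [heval]
    have h0 : u + ((d + 1 : ℕ) : ZMod n) - u = ((d + 1 : ℕ) : ZMod n) := by ring
    rw [h0, ZMod.val_cast_of_lt (by omega : d + 1 < n)]
    have hψd : ψ (d + 1) = d - 1 := by simp only [hψ]; rw [if_neg (by omega)]; omega
    rw [hψd]
    intro hcon
    have := hinj hcon
    have h2 : ((d - 1 : ℕ) : ZMod n) = ((d + 1 : ℕ) : ZMod n) := by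
      exact add_left_cancel this
    have h3 : d - 1 = d + 1 := by
      have := congrArg ZMod.val h2
      rwa [ZMod.val_cast_of_lt (by omega : d - 1 < n),
        ZMod.val_cast_of_lt (by omega : d + 1 < n)] at this
    omega

/-- Freezing sets of three points for digital cycles `C_n`, `n > 4`. The
cycle is given by an injective `x : ZMod n → ℤ^N` with consecutive-index
adjacency. The indices `a < b < c < n` cut `C_n` into three arcs, each of
length less than `n/2`, so `C_n` is the union of the unique shorter paths
determined by the three points. Then for `f ∈ C(C_n,κ)`, `f = id` iff `f`
fixes the three points; i.e., they form a freezing set, and it is minimal. -/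
theorem stmt14 {N n : ℕ} (hn : 4 < n)
    (x : ZMod n → (Fin N → ℤ)) (hinj : Function.Injective x)
    (C : Set (Fin N → ℤ)) (hC : C = Set.range x)
    (κ : (Fin N → ℤ) → (Fin N → ℤ) → Prop)
    (hadj : ∀ i j : ZMod n, κ (x i) (x j) ↔ (j = i + 1 ∨ i = j + 1))
    (a b c : ℕ) (hab : a < b) (hbc : b < c) (hcn : c < n)
    (h1 : 2 * (b - a) < n) (h2 : 2 * (c - b) < n) (h3 : 2 * (n - c + a) < n) :
    (∀ f, InC κ C f →
      ((∀ p ∈ C, f p = p) ↔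
        (f (x ↑a) = x ↑a ∧ f (x ↑b) = x ↑b ∧ f (x ↑c) = x ↑c))) ∧
    FreezingSet κ C {x ↑a, x ↑b, x ↑c} ∧
    ∀ B ⊂ ({x ↑a, x ↑b, x ↑c} : Set (Fin N → ℤ)), ¬ FreezingSet κ C B := by
  haveI : NeZero n := ⟨by omega⟩
  have hmemC : ∀ i : ZMod n, x i ∈ C := fun i => hC ▸ ⟨i, rfl⟩
  -- cast identities for arc endpoints
  have eab : ((a : ZMod n)) + ((b - a : ℕ) : ZMod n) = (b : ZMod n) := by
    rw [← Nat.cast_add]; congr 1; omega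
  have ebc : ((b : ZMod n)) + ((c - b : ℕ) : ZMod n) = (c : ZMod n) := by
    rw [← Nat.cast_add]; congr 1; omega
  have eca : ((c : ZMod n)) + ((n - c + a : ℕ) : ZMod n) = (a : ZMod n) := by
    rw [← Nat.cast_add, show c + (n - c + a) = n + a by omega, Nat.cast_add,
      ZMod.natCast_self, zero_add]
  -- main freezing fact
  have main : ∀ f, InC κ C f → f (x ↑a) = x ↑a → f (x ↑b) = x ↑b → f (x ↑c) = x ↑c →
      ∀ p ∈ C, f p = p := by
    intro f hf ha hb hc'
    have hex : ∀ i : ZMod n, ∃ j, x j = f (x i) := by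
      intro i
      have := hf.1 (hmemC i)
      rw [hC] at this
      exact this
    choose F hF using hex
    have hstep : ∀ i : ZMod n, ∃ δ : ℤ, δ.natAbs ≤ 1 ∧ F (i + 1) = F i + (δ : ZMod n) := by
      intro i
      have hκ : κ (x i) (x (i + 1)) := (hadj i (i + 1)).mpr (Or.inl rfl)
      rcases hf.2 (x i) (hmemC i) (x (i + 1)) (hmemC (i + 1)) hκ with h | h
      · refine ⟨0, by simp, ?_⟩
        have : x (F (i + 1)) = x (F i) := by rw [hF, hF, h]
        have := hinj this
        rw [this]; push_cast; ring
      · rw [← hF, ← hF] at h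
        rcases (hadj _ _).mp h with h' | h'
        · exact ⟨1, by simp, by rw [h']; push_cast; ring⟩
        · refine ⟨-1, by simp, ?_⟩
          have : F (i + 1) = F i - 1 := by rw [h']; ring
          rw [this]; push_cast; ring
    have hFa : F (a : ZMod n) = (a : ZMod n) := hinj ((hF _).trans ha)
    have hFb : F (b : ZMod n) = (b : ZMod n) := hinj ((hF _).trans hb)
    have hFc : F (c : ZMod n) = (c : ZMod n) := hinj ((hF _).trans hc')
    have arc1 := walk_rigid F hstep (a : ZMod n) (b - a) h1 hFa (by rw [eab]; exact hFb)
    have arc2 := walk_rigid F hstep (b : ZMod n) (c - b) h2 hFb (by rw [ebc]; exact hFc)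
    have arc3 := walk_rigid F hstep (c : ZMod n) (n - c + a) h3 hFc (by rw [eca]; exact hFa)
    have hall : ∀ i : ZMod n, F i = i := by
      intro i
      have hiv : ((i.val : ℕ) : ZMod n) = i := ZMod.natCast_rightInverse i
      have hivn : i.val < n := ZMod.val_lt i
      rcases le_or_gt i.val a with hcase | hcase
      · have ht : n - c + i.val ≤ n - c + a := by omega
        have he : ((c : ZMod n)) + ((n - c + i.val : ℕ) : ZMod n) = i := by
          rw [← Nat.cast_add, show c + (n - c + i.val) = n + i.val by omega,
            Nat.cast_add, ZMod.natCast_self, zero_add, hiv]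
        have := arc3 _ ht
        rwa [he] at this
      · rcases le_or_gt i.val b with hcase2 | hcase2
        · have ht : i.val - a ≤ b - a := by omega
          have he : ((a : ZMod n)) + ((i.val - a : ℕ) : ZMod n) = i := by
            rw [← Nat.cast_add, show a + (i.val - a) = i.val by omega, hiv]
          have := arc1 _ ht
          rwa [he] at this
        · rcases le_or_gt i.val c with hcase3 | hcase3
          · have ht : i.val - b ≤ c - b := by omega
            have he : ((b : ZMod n)) + ((i.val - b : ℕ) : ZMod n) = i := by
              rw [← Nat.cast_add, show b + (i.val - b) = i.val by omega, hiv]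
            have := arc2 _ ht
            rwa [he] at this
          · have ht : i.val - c ≤ n - c + a := by omega
            have he : ((c : ZMod n)) + ((i.val - c : ℕ) : ZMod n) = i := by
              rw [← Nat.cast_add, show c + (i.val - c) = i.val by omega, hiv]
            have := arc3 _ ht
            rwa [he] at this
    intro p hp
    rw [hC] at hp
    obtain ⟨i, rfl⟩ := hp
    rw [← hF, hall]
  refine ⟨?_, ?_, ?_⟩
  · intro f hf
    constructor
    · intro h
      exact ⟨h _ (hmemC _), h _ (hmemC _), h _ (hmemC _)⟩
    · rintro ⟨ha, hb, hc'⟩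
      exact main f hf ha hb hc'
  · intro f hf hfix
    exact main f hf (hfix _ (by simp)) (hfix _ (by simp)) (hfix _ (by simp))
  · intro B hB hFz
    have hmiss : x ↑a ∉ B ∨ x ↑b ∉ B ∨ x ↑c ∉ B := by
      by_contra h
      push_neg at h
      obtain ⟨ha', hb', hc''⟩ := h
      apply hB.2
      intro p hp
      simp only [Set.mem_insert_iff, Set.mem_singleton_iff] at hp
      rcases hp with rfl | rfl | rfl <;> assumption
    rcases hmiss with hm | hm | hm
    · -- x a missing : fold fixing x b and x c
      obtain ⟨f, hfC, hfu, hfv, p, hp, hne⟩ :=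
        fold_map hn x hinj C hC κ hadj (b : ZMod n) (c - b) (by omega) h2
      rw [ebc] at hfv
      refine hne (hFz f hfC ?_ p hp)
      intro q hq
      have hqS := hB.1 hq
      simp only [Set.mem_insert_iff, Set.mem_singleton_iff] at hqS
      rcases hqS with rfl | rfl | rfl
      · exact absurd hq hm
      · exact hfu
      · exact hfv
    · -- x b missing : fold fixing x c and x a
      obtain ⟨f, hfC, hfu, hfv, p, hp, hne⟩ :=
        fold_map hn x hinj C hC κ hadj (c : ZMod n) (n - c + a) (by omega) h3
      rw [eca] at hfv
      refine hne (hFz f hfC ?_ p hp)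
      intro q hq
      have hqS := hB.1 hq
      simp only [Set.mem_insert_iff, Set.mem_singleton_iff] at hqS
      rcases hqS with rfl | rfl | rfl
      · exact hfv
      · exact absurd hq hm
      · exact hfu
    · -- x c missing : fold fixing x a and x b
      obtain ⟨f, hfC, hfu, hfv, p, hp, hne⟩ :=
        fold_map hn x hinj C hC κ hadj (a : ZMod n) (b - a) (by omega) h1
      rw [eab] at hfv
      refine hne (hFz f hfC ?_ p hp)
      intro q hq
      have hqS := hB.1 hq
      simp only [Set.mem_insert_iff, Set.mem_singleton_iff] at hqS
      rcases hqS with rfl | rfl | rfl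
      · exact hfu
      · exact hfv
      · exact absurd hq hm
end

section
/- Let A be a freezing set for (X,κ), where X = X₀ ∨ X₁ ⊂ ℤⁿ is a wedge with wedge point x₀ (X₀ ∩ X₁ = {x₀}), #X₀ > 1, and #X₁ > 1. Then A contains a point of X₀ \ {x₀} and a point of X₁ \ {x₀}. -/
open Classical in
lemma stmt15_aux {n : ℕ} (κ : (Fin n → ℤ) → (Fin n → ℤ) → Prop)
    (hsymm : ∀ p q, κ p q → κ q p)
    (X X0 X1 : Set (Fin n → ℤ)) (x0 : Fin n → ℤ)
    (hX : X = X0 ∪ X1) (hmeet : X0 ∩ X1 = {x0})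
    (hwedge : ∀ p ∈ X0, ∀ q ∈ X1, κ p q → p = x0 ∨ q = x0)
    (h0 : X0.Nontrivial)
    (A : Set (Fin n → ℤ)) (hA : A ⊆ X) (hfr : FreezingSet κ X A) :
    ∃ p ∈ A, p ∈ X0 ∧ p ≠ x0 := by
  by_contra hcon
  push_neg at hcon
  have hx00 : x0 ∈ X0 := by
    have : x0 ∈ X0 ∩ X1 := by rw [hmeet]; rfl
    exact this.1
  have hx01 : x0 ∈ X1 := by
    have : x0 ∈ X0 ∩ X1 := by rw [hmeet]; rfl
    exact this.2
  have hx0X : x0 ∈ X := by rw [hX]; exact Or.inl hx00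
  -- the collapsing map
  set f : (Fin n → ℤ) → (Fin n → ℤ) := fun y => if y ∈ X0 then x0 else y with hf
  have hmaps : Set.MapsTo f X X := by
    intro y hy
    by_cases h : y ∈ X0
    · simp [hf, h, hx0X]
    · simp [hf, h, hy]
  have hcont : DigCont κ κ X f := by
    intro x hx x' hx' hk
    by_cases h : x ∈ X0 <;> by_cases h' : x' ∈ X0
    · left; simp [hf, h, h']
    · -- x ∈ X0, x' ∉ X0, so x' ∈ X1
      have hx'1 : x' ∈ X1 := by
        rcases hX ▸ hx' with h2 | h2
        · exact absurd h2 h'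
        · exact h2
      rcases hwedge x h x' hx'1 hk with he | he
      · right; simpa [hf, h, h', ← he] using hk
      · exact absurd (he ▸ hx00) h'
    · have hx1 : x ∈ X1 := by
        rcases hX ▸ hx with h2 | h2
        · exact absurd h2 h
        · exact h2
      rcases hwedge x' h' x hx1 (hsymm _ _ hk) with he | he
      · right; simpa [hf, h, h', ← he] using hk
      · exact absurd (he ▸ hx00) h
    · right; simpa [hf, h, h'] using hk
  have hfix : ∀ a ∈ A, f a = a := by
    intro a ha
    by_cases h : a ∈ X0
    · have : a = x0 := by
        by_contra hne
        exact hne (hcon a ha h)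
      simp [hf, h, this]
    · simp [hf, h]
  -- derive contradiction using nontriviality of X0
  obtain ⟨y, hy, z, hz, hyz⟩ := h0
  have key : ∀ w ∈ X0, w = x0 := by
    intro w hw
    have hwX : w ∈ X := by rw [hX]; exact Or.inl hw
    have := hfr f ⟨hmaps, hcont⟩ hfix w hwX
    simpa [hf, hw] using this.symm
  exact hyz ((key y hy).trans (key z hz).symm)

/-- A freezing set of a wedge `X = X₀ ∨ X₁` (with wedge point `x₀` and both
wedge summands having more than one point) must contain a point of
`X₀ \ {x₀}` and a point of `X₁ \ {x₀}`. -/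
theorem stmt15 {n : ℕ} (κ : (Fin n → ℤ) → (Fin n → ℤ) → Prop)
    (hsymm : ∀ p q, κ p q → κ q p)
    (X X0 X1 : Set (Fin n → ℤ)) (x0 : Fin n → ℤ)
    (hX : X = X0 ∪ X1) (hmeet : X0 ∩ X1 = {x0})
    (hwedge : ∀ p ∈ X0, ∀ q ∈ X1, κ p q → p = x0 ∨ q = x0)
    (h0 : X0.Nontrivial) (h1 : X1.Nontrivial)
    (A : Set (Fin n → ℤ)) (hA : A ⊆ X) (hfr : FreezingSet κ X A) :
    (∃ p ∈ A, p ∈ X0 ∧ p ≠ x0) ∧ (∃ p ∈ A, p ∈ X1 ∧ p ≠ x0) := by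
  constructor
  · exact stmt15_aux κ hsymm X X0 X1 x0 hX hmeet hwedge h0 A hA hfr
  · refine stmt15_aux κ hsymm X X1 X0 x0 ?_ ?_ ?_ h1 A hA hfr
    · rw [hX, Set.union_comm]
    · rw [Set.inter_comm, hmeet]
    · intro p hp q hq hk
      exact (hwedge q hq p hp (hsymm _ _ hk)).symm
end

section
/- Let (X,κ) be a digital image such that the graph (X,κ) is a finite connected tree (acyclic connected graph) with #X > 1. Let E be the set of vertices of this graph that have degree 1. Then E is a minimal freezing set for (X,κ). -/
/-!
A continuous self-map of a graph does not increase path distance. In a finite tree, suppose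
`f x ≠ x` and take the path from `x` to `f x`. Prepending at each step a neighbour other than
the next vertex (acyclicity keeps it a path) ends at a leaf `l`, and then
`d(l, f x) = d(l, x) + d(x, f x) > d(l, x) ≥ d(f l, f x)`, so `f` does not fix `l`.
Conversely, collapsing one leaf onto its unique neighbour is continuous and fixes every other
point, so no leaf can be dropped.
-/

namespace SimpleGraph

variable {V : Type*} {G : SimpleGraph V}

def IsContinuous (G : SimpleGraph V) (F : V → V) : Prop :=
  ∀ ⦃a b⦄, G.Adj a b → F a = F b ∨ G.Adj (F a) (F b)

namespace IsContinuous

variable {F : V → V}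

lemma exists_walk_length_le (hF : G.IsContinuous F) {a b : V} (p : G.Walk a b) :
    ∃ q : G.Walk (F a) (F b), q.length ≤ p.length := by
  induction p with
  | nil => exact ⟨.nil, le_rfl⟩
  | cons hadj p ih =>
    obtain ⟨q, hq⟩ := ih
    rcases hF hadj with heq | hadj'
    · exact ⟨q.copy heq.symm rfl, by simp only [Walk.length_copy, Walk.length_cons]; omega⟩
    · exact ⟨q.cons hadj', by simp only [Walk.length_cons]; omega⟩

lemma dist_le (hF : G.IsContinuous F) {a b : V} (hab : G.Reachable a b) :
    G.dist (F a) (F b) ≤ G.dist a b := by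
  obtain ⟨p, hp⟩ := hab.exists_walk_length_eq_dist
  obtain ⟨q, hq⟩ := hF.exists_walk_length_le p
  exact (SimpleGraph.dist_le q).trans (hp ▸ hq)

end IsContinuous

lemma IsAcyclic.length_eq_dist_of_isPath (hG : G.IsAcyclic) {u v : V} {p : G.Walk u v}
    (hp : p.IsPath) : p.length = G.dist u v := by
  obtain ⟨q, hq, hqd⟩ := p.reachable.exists_path_of_dist
  rw [← hqd, Subtype.mk.inj <| hG.subsingleton_path u v |>.elim ⟨p, hp⟩ ⟨q, hq⟩]

lemma IsAcyclic.exists_leaf_isPath_append [Finite V] (hG : G.IsAcyclic) {v w : V}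
    (p : G.Walk v w) (hp : p.IsPath) (hnil : ¬ p.Nil) :
    ∃ (l : V) (q : G.Walk l v), (G.neighborSet l).ncard = 1 ∧ (q.append p).IsPath := by
  have := Fintype.ofFinite V
  induction hk : Fintype.card V - p.length using Nat.strong_induction_on generalizing v with
  | _ k ih =>
    by_cases hv : (G.neighborSet v).ncard = 1
    · exact ⟨v, .nil, hv, by simpa⟩
    obtain ⟨c, hc, hcs⟩ : ∃ c, G.Adj v c ∧ c ≠ p.snd := by
      by_contra! h
      exact hv <| Set.ncard_eq_one.mpr
        ⟨p.snd, Set.eq_singleton_iff_unique_mem.mpr ⟨p.adj_snd hnil, h⟩⟩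
    have hcp : (Walk.cons hc.symm p).IsPath :=
      hp.cons fun h ↦ hcs (hG.eq_snd_of_adj_start hp hc h)
    have hlt : Fintype.card V - (p.length + 1) < k := by
      have := hcp.length_lt
      rw [Walk.length_cons] at this
      omega
    obtain ⟨l, q, hl, hq⟩ := ih _ hlt (Walk.cons hc.symm p) hcp Walk.not_nil_cons rfl
    exact ⟨l, q.concat hc.symm, hl, by rwa [Walk.concat_append]⟩

theorem IsTree.eq_of_isContinuous_of_forall_leaf [Finite V] (hG : G.IsTree) {F : V → V}
    (hF : G.IsContinuous F) (hleaf : ∀ l, (G.neighborSet l).ncard = 1 → F l = l) (v : V) :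
    F v = v := by
  by_contra hne
  obtain ⟨p, hp, -⟩ := hG.connected.exists_path_of_dist v (F v)
  have hnil : ¬ p.Nil := fun h ↦ hne h.eq.symm
  obtain ⟨l, q, hl, hqp⟩ := hG.isAcyclic.exists_leaf_isPath_append p hp hnil
  have hlFv := hG.isAcyclic.length_eq_dist_of_isPath hqp
  have hlv := hG.isAcyclic.length_eq_dist_of_isPath hqp.of_append_left
  have hF_lv := hF.dist_le (hG.connected l v)
  rw [hleaf l hl, ← hlFv, ← hlv, Walk.length_append] at hF_lv
  exact hnil (Walk.length_eq_zero_iff.mp (by omega))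

end SimpleGraph

section DigitalImage

variable {α : Type*} {κ : α → α → Prop} {X : Set α}

lemma ncard_neighborSet_eq {G : SimpleGraph X} (hG : ∀ p q : X, G.Adj p q ↔ κ p q) (p : X) :
    (G.neighborSet p).ncard = {q ∈ X | κ p q}.ncard := by
  have : {q ∈ X | κ p q} = Subtype.val '' G.neighborSet p := by
    ext q
    exact ⟨fun ⟨hq, hpq⟩ ↦ ⟨⟨q, hq⟩, (hG _ _).mpr hpq, rfl⟩,
      by rintro ⟨q, hpq, rfl⟩; exact ⟨q.2, (hG _ _).mp hpq⟩⟩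
  rw [this, Set.ncard_image_of_injective _ Subtype.val_injective]

lemma InC.isContinuous_restrict {G : SimpleGraph X} (hG : ∀ p q : X, G.Adj p q ↔ κ p q)
    {f : α → α} (hf : InC κ X f) : G.IsContinuous (hf.1.restrict f X X) := by
  intro a b hab
  exact (hf.2 a a.2 b b.2 ((hG a b).mp hab)).imp Subtype.ext fun h ↦ (hG _ _).mpr h

theorem freezingSet_leaves_of_isTree [Finite X] {G : SimpleGraph X}
    (hG : ∀ p q : X, G.Adj p q ↔ κ p q) (htree : G.IsTree) :
    FreezingSet κ X {p ∈ X | {q ∈ X | κ p q}.ncard = 1} := by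
  intro f hf hfix x hx
  refine congrArg Subtype.val
    (htree.eq_of_isContinuous_of_forall_leaf (hf.isContinuous_restrict hG) (fun l hl ↦ ?_) ⟨x, hx⟩)
  exact Subtype.ext <| hfix l ⟨l.2, ncard_neighborSet_eq hG l ▸ hl⟩

lemma inC_update_leaf [DecidableEq α] (hsymm : ∀ p q, κ p q → κ q p) (hirr : ∀ p, ¬ κ p p)
    {l v : α} (hl : {q ∈ X | κ l q} = {v}) : InC κ X (Function.update id l v) := by
  have hnbr : ∀ q ∈ X, κ l q ↔ q = v := fun q hq ↦ by simpa [hq] using Set.ext_iff.mp hl q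
  have hv : v ∈ {q ∈ X | κ l q} := hl ▸ rfl
  refine ⟨fun a ha ↦ ?_, fun a ha b hb hab ↦ ?_⟩
  · by_cases h : a = l <;> simp [h, ha, hv.1]
  by_cases hal : a = l <;> by_cases hbl : b = l
  · subst hal hbl
    exact absurd hab (hirr _)
  · subst hal
    left
    rw [Function.update_self, Function.update_of_ne hbl]
    exact ((hnbr b hb).mp hab).symm
  · subst hbl
    left
    rw [Function.update_self, Function.update_of_ne hal]
    exact (hnbr a ha).mp (hsymm _ _ hab)
  · right
    rwa [Function.update_of_ne hal, Function.update_of_ne hbl]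

lemma not_freezingSet_of_leaf_notMem (hsymm : ∀ p q, κ p q → κ q p) (hirr : ∀ p, ¬ κ p p)
    {l : α} (hl : l ∈ X) (hdeg : {q ∈ X | κ l q}.ncard = 1) {B : Set α} (hlB : l ∉ B) :
    ¬ FreezingSet κ X B := by
  classical
  obtain ⟨v, hv⟩ := Set.ncard_eq_one.mp hdeg
  intro hB
  have hfix := hB _ (inC_update_leaf hsymm hirr hv)
    (fun a ha ↦ Function.update_of_ne (ne_of_mem_of_not_mem ha hlB) _ _) l hl
  rw [Function.update_self] at hfix
  have hlv : v ∈ {q ∈ X | κ l q} := hv ▸ rfl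
  exact hirr l (hfix ▸ hlv.2)

end DigitalImage

theorem stmt16_general {n : ℕ} (κ : (Fin n → ℤ) → (Fin n → ℤ) → Prop)
    (hsymm : ∀ p q, κ p q → κ q p) (hirr : ∀ p, ¬ κ p p)
    (X : Set (Fin n → ℤ)) (hfin : X.Finite)
    (G : SimpleGraph X) (hG : ∀ p q : X, G.Adj p q ↔ κ p q)
    (htree : G.IsTree)
    (E : Set (Fin n → ℤ))
    (hE : E = {p ∈ X | ({q ∈ X | κ p q}).ncard = 1}) :
    FreezingSet κ X E ∧ ∀ B ⊂ E, ¬ FreezingSet κ X B := by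
  subst hE
  have := hfin.to_subtype
  refine ⟨freezingSet_leaves_of_isTree hG htree, fun B hBE ↦ ?_⟩
  obtain ⟨l, ⟨hl, hdeg⟩, hlB⟩ := Set.exists_of_ssubset hBE
  exact not_freezingSet_of_leaf_notMem hsymm hirr hl hdeg hlB

/-- If the graph of a finite digital image `(X,κ)` with more than one point
is a tree (connected and acyclic), then the set `E` of vertices of degree 1
is a minimal freezing set for `(X,κ)`. -/
theorem stmt16 {n : ℕ} (κ : (Fin n → ℤ) → (Fin n → ℤ) → Prop)
    (hsymm : ∀ p q, κ p q → κ q p) (hirr : ∀ p, ¬ κ p p)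
    (X : Set (Fin n → ℤ)) (hfin : X.Finite) (hcard : 1 < X.ncard)
    (G : SimpleGraph X) (hG : ∀ p q : X, G.Adj p q ↔ κ p q)
    (htree : G.IsTree)
    (E : Set (Fin n → ℤ))
    (hE : E = {p ∈ X | ({q ∈ X | κ p q}).ncard = 1}) :
    FreezingSet κ X E ∧ ∀ B ⊂ E, ¬ FreezingSet κ X B :=
  stmt16_general κ hsymm hirr X hfin G hG htree E hE
end

section
/- Let 1 ≤ u ≤ n, let s ≥ 0 be an integer, and let A ⊂ ℤⁿ. If A is an s-cold set for (ℤⁿ, c_u), then for every index i, the projection p_i(A) ⊂ ℤ is unbounded above and unbounded below (it contains sequences tending to ∞ and to −∞). -/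
/-- There is a `κ`-path of length `ℓ` in `X` from `x` to `y`. -/
def DigPathLen {α : Type*} (κ : α → α → Prop) (X : Set α) (x y : α) (ℓ : ℕ) : Prop :=
  ∃ p : ℕ → α, p 0 = x ∧ p ℓ = y ∧ (∀ t ≤ ℓ, p t ∈ X) ∧
    ∀ t < ℓ, p t = p (t + 1) ∨ κ (p t) (p (t + 1))

/-- `A` is an `s`-cold set for `(X,κ)`: every `f ∈ C(X,κ)` that fixes `A`
pointwise moves each point of `X` a path-length distance of at most `s`. -/
def ColdSet {α : Type*} (s : ℕ) (κ : α → α → Prop) (X A : Set α) : Prop :=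
  ∀ f, InC κ X f → (∀ a ∈ A, f a = a) →
    ∀ x ∈ X, ∃ ℓ ≤ s, DigPathLen κ X x (f x) ℓ

lemma coordMap_cont {n u : ℕ} (i : Fin n) (h : ℤ → ℤ)
    (hl : ∀ a b : ℤ, (h a - h b).natAbs ≤ (a - b).natAbs) :
    InC (cuAdj n u) Set.univ (fun x j => if j = i then h (x j) else x j) := by
  constructor
  · intro x _; trivial
  · intro x _ x' _ hadj
    by_cases heq : (fun j => if j = i then h (x j) else x j)
        = (fun j => if j = i then h (x' j) else x' j)
    · exact Or.inl heq
    · refine Or.inr ⟨heq, ?_, ?_⟩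
      · intro j
        by_cases hj : j = i
        · subst hj; simpa using le_trans (hl (x j) (x' j)) (hadj.2.1 j)
        · simpa [hj] using hadj.2.1 j
      · refine le_trans (Finset.card_le_card ?_) hadj.2.2
        intro j hj
        simp only [Finset.mem_filter, Finset.mem_univ, true_and] at *
        by_cases hji : j = i
        · subst hji
          intro hxx; exact hj (by simp [hxx])
        · simpa [hji] using hj

lemma path_coord {n u : ℕ} (i : Fin n) {x y : Fin n → ℤ} {ℓ : ℕ}
    (hp : DigPathLen (cuAdj n u) Set.univ x y ℓ) : (x i - y i).natAbs ≤ ℓ := by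
  obtain ⟨p, h0, hN, _, hstep⟩ := hp
  have key : ∀ t ≤ ℓ, (p 0 i - p t i).natAbs ≤ t := by
    intro t ht
    induction t with
    | zero => simp
    | succ k ih =>
      have hk := ih (le_of_lt (Nat.lt_of_succ_le ht))
      rcases hstep k (Nat.lt_of_succ_le ht) with hq | hq
      · have : p (k + 1) i = p k i := by rw [hq]
        omega
      · have := hq.2.1 i
        omega
  have := key ℓ le_rfl
  rw [h0, hN] at this
  exact this

/-- If `A` is an `s`-cold set for `(ℤⁿ, c_u)`, then each coordinate
projection of `A` is unbounded above and unbounded below in `ℤ`. -/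
theorem stmt19 {n u : ℕ} (hu1 : 1 ≤ u) (hun : u ≤ n) (s : ℕ)
    (A : Set (Fin n → ℤ))
    (hcold : ColdSet s (cuAdj n u) Set.univ A) :
    ∀ i : Fin n, ∀ M : ℤ, (∃ a ∈ A, M < a i) ∧ (∃ a ∈ A, a i < M) := by
  intro i M
  constructor
  · by_contra hne
    push_neg at hne
    set f : (Fin n → ℤ) → (Fin n → ℤ) := fun x j => if j = i then min (x j) M else x j with hf
    have hcont : InC (cuAdj n u) Set.univ f :=
      coordMap_cont i (fun z => min z M) (by
        intro a b
        simp only [min_def]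
        split_ifs <;> omega)
    have hfix : ∀ a ∈ A, f a = a := by
      intro a ha
      funext j
      by_cases hj : j = i
      · subst hj; simp [hf, min_eq_left (hne a ha)]
      · simp [hf, hj]
    set x : Fin n → ℤ := fun j => if j = i then M + s + 1 else 0 with hx
    obtain ⟨ℓ, hℓ, hpath⟩ := hcold f hcont hfix x trivial
    have hc := path_coord i hpath
    have hxi : x i = M + s + 1 := by simp [hx]
    have hfxi : f x i = M := by simp [hf, hx, min_eq_right]; omega
    rw [hxi, hfxi] at hc
    omega
  · by_contra hne
    push_neg at hne
    set f : (Fin n → ℤ) → (Fin n → ℤ) := fun x j => if j = i then max (x j) M else x j with hf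
    have hcont : InC (cuAdj n u) Set.univ f :=
      coordMap_cont i (fun z => max z M) (by
        intro a b
        simp only [max_def]
        split_ifs <;> omega)
    have hfix : ∀ a ∈ A, f a = a := by
      intro a ha
      funext j
      by_cases hj : j = i
      · subst hj; simp [hf, max_eq_left (hne a ha)]
      · simp [hf, hj]
    set x : Fin n → ℤ := fun j => if j = i then M - s - 1 else 0 with hx
    obtain ⟨ℓ, hℓ, hpath⟩ := hcold f hcont hfix x trivial
    have hc := path_coord i hpath
    have hxi : x i = M - s - 1 := by simp [hx]
    have hfxi : f x i = M := by simp [hf, hx, max_eq_right]; omega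
    rw [hxi, hfxi] at hc
    omega
end
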